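/- arXiv:2108.03641 — 2 statements merged into one kernel-verified Lean document; each statement's English description precedes it below -/
import Mathlib

section
/- Any BC protocol can be converted into a strongly envy-equivalent BC protocol in which every choose node of the tree representation either has no cut node descendants, or has only cut node children; furthermore, in the latter case, if the choose node is controlled by agent i, then all of its cut node children are also controlled by agent i and correspond to cuts into a sequence of consecutive contiguous pieces of the current partition. -/
/-! ## Cake, valuations, envy, abstract game forms -/

/-- A piece of cake: a finite list of subintervals of `[0,1]`, given by endpoint pairs. -/
abbrev Piece := List (ℝ × ℝ)

/-- A valuation function on subintervals of `[0,1]`: nonnegative, normalized,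
additive and divisible. -/
structure CakeValuation where
  v : ℝ → ℝ → ℝ
  nonneg : ∀ a b, 0 ≤ a → a ≤ b → b ≤ 1 → 0 ≤ v a b
  normalized : v 0 1 = 1
  additive : ∀ a b c, 0 ≤ a → a ≤ b → b ≤ c → c ≤ 1 → v a b + v b c = v a c
  divisible : ∀ a b, 0 ≤ a → a ≤ b → b ≤ 1 → ∀ lam : ℝ, 0 ≤ lam → lam ≤ 1 →
    ∃ c, a ≤ c ∧ c ≤ b ∧ v a c = lam * v a b

/-- The value of a piece of cake: the sum of the values of its intervals. -/
def pieceValue (V : CakeValuation) (P : Piece) : ℝ := (P.map fun q => V.v q.1 q.2).sum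

/-- The envy of agent `i` towards agent `j` under allocation `A`. -/
def envy {n : ℕ} (V : CakeValuation) (A : Fin n → Piece) (i j : Fin n) : ℝ :=
  max (pieceValue V (A j) - pieceValue V (A i)) 0

/-- An abstract cake-cutting protocol, viewed as an extensive-form game:
each agent has a type of strategies, and a strategy profile determines the
final allocation of pieces of cake to the agents. -/
structure GameForm (n : ℕ) where
  Strategy : Fin n → Type
  play : (∀ i, Strategy i) → Fin n → Piece

/-- Agent `i`, with private valuation `V`, can guarantee the envy bounds
`envy (i, j) ≤ M j` for all `j ∈ S` in protocol `P`: `i` has a strategy such that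
against all strategies of the other agents the bounds hold. -/
def Guarantees {n : ℕ} (P : GameForm n) (i : Fin n) (S : Finset (Fin n))
    (M : Fin n → ℝ) (V : CakeValuation) : Prop :=
  ∃ s : P.Strategy i, ∀ σ : ∀ j, P.Strategy j, σ i = s →
    ∀ j ∈ S, envy V (P.play σ) i j ≤ M j

/-- Two protocols are strongly envy-equivalent if every agent can guarantee the same
simultaneous envy bounds (with values in `[0,1]`, against any set `S` of other agents)
in both. -/
def StronglyEnvyEquiv {n : ℕ} (P P' : GameForm n) : Prop :=
  ∀ (i : Fin n) (S : Finset (Fin n)), i ∉ S →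
    ∀ M : Fin n → ℝ, (∀ j ∈ S, M j ∈ Set.Icc (0 : ℝ) 1) →
      ∀ V : CakeValuation, (Guarantees P i S M V ↔ Guarantees P' i S M V)

/-! ## Histories and strategies -/

/-- An execution history: the sequence of cut points made (`Sum.inl`)
and of discrete choices taken (`Sum.inr`) so far. -/
abbrev Hist := List (ℝ ⊕ ℕ)

/-- A strategy of an agent: as a function of the execution history, where to cut
at a node where the agent cuts, and which index to pick at a node where the agent
chooses. -/
structure BCStrategy where
  cutAt : Hist → ℝ
  chooseAt : Hist → ℕ

/-- The initial reference points of the cake `[0,1]`. -/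
def initPts : Fin 2 → ℝ := fun t => if t = 0 then 0 else 1

/-- Turn a list of (interval, agent) pairs into an allocation. -/
def allocOf {n : ℕ} (L : List (ℝ × ℝ × Fin n)) : Fin n → Piece :=
  fun a => (L.filter fun q => decide (q.2.2 = a)).map fun q => (q.1, q.2.1)

/-! ## Branch choice (BC) protocols -/

/-- A branch choice (BC) protocol tree over `n` agents, indexed by the number of cuts
made so far.  At a `cut` node, the designated agent makes one cut inside the `j`-th
contiguous piece of the current partition of the cake (such a node has one child);
at a `choose` node the designated agent selects which child the execution proceeds to;
a `leaf` assigns each contiguous piece of the final partition to an agent. -/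
inductive BCTree (n : ℕ) : ℕ → Type
  | leaf {m : ℕ} (alloc : Fin (m + 1) → Fin n) : BCTree n m
  | cut {m : ℕ} (agent : Fin n) (piece : Fin (m + 1)) (child : BCTree n (m + 1)) : BCTree n m
  | choose {m : ℕ} (agent : Fin n) {k : ℕ} (children : Fin (k + 1) → BCTree n m) : BCTree n m

/-- Insert a new cut point `y` inside the `j`-th piece of the sorted partition `c`. -/
def insertPt {m : ℕ} (c : Fin (m + 2) → ℝ) (j : Fin (m + 1)) (y : ℝ) : Fin (m + 3) → ℝ :=
  fun t =>
    if h1 : (t : ℕ) ≤ (j : ℕ) then c ⟨t, by have := j.isLt; omega⟩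
    else if (t : ℕ) = (j : ℕ) + 1 then y
    else c ⟨(t : ℕ) - 1, by have := t.isLt; omega⟩

/-- Playing a BC protocol: given the sorted cut points made so far, the execution
history, and a strategy profile, compute the final list of (interval, agent) pairs. -/
def BCTree.playAlloc {n : ℕ} : {m : ℕ} → BCTree n m → (Fin (m + 2) → ℝ) → Hist →
    (Fin n → BCStrategy) → List (ℝ × ℝ × Fin n)
  | m, .leaf alloc, c, _, _ =>
      (List.finRange (m + 1)).map fun t => (c t.castSucc, c t.succ, alloc t)
  | _, .cut i j child, c, h, σ =>
      let y := max (c j.castSucc) (min ((σ i).cutAt h) (c j.succ))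
      child.playAlloc (insertPt c j y) (h ++ [Sum.inl y]) σ
  | _, @BCTree.choose _ _ i k children, c, h, σ =>
      let t : Fin (k + 1) := ⟨(σ i).chooseAt h % (k + 1), Nat.mod_lt _ (Nat.succ_pos k)⟩
      (children t).playAlloc c (h ++ [Sum.inr (t : ℕ)]) σ

/-- The extensive-form game determined by a BC protocol. -/
def BCTree.toGame {n : ℕ} (t : BCTree n 0) : GameForm n where
  Strategy := fun _ => BCStrategy
  play := fun σ => allocOf (t.playAlloc initPts [] σ)

/-- A BC tree contains a cut node. -/
def BCTree.hasCut {n : ℕ} : {m : ℕ} → BCTree n m → Prop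
  | _, .leaf _ => False
  | _, .cut _ _ _ => True
  | _, @BCTree.choose _ _ _ _ children => ∃ t, (children t).hasCut

/-- No choose node of the tree has a cut node among its descendants. -/
def BCTree.cutsBeforeChoices {n : ℕ} : {m : ℕ} → BCTree n m → Prop
  | _, .leaf _ => True
  | _, .cut _ _ child => child.cutsBeforeChoices
  | _, @BCTree.choose _ _ _ _ children => ∀ t, ¬ (children t).hasCut

/-- Every choose node of the tree either has no cut node descendants, or has only cut
node children, which are controlled by the same agent as the choose node itself and
correspond to cuts into a sequence of consecutive contiguous pieces of the current
partition. -/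
def BCTree.intermediateForm {n : ℕ} : {m : ℕ} → BCTree n m → Prop
  | _, .leaf _ => True
  | _, .cut _ _ child => child.intermediateForm
  | m, @BCTree.choose _ _ i k children =>
      (∀ t, (children t).intermediateForm) ∧
      ((∀ t, ¬ (children t).hasCut) ∨
        ∃ j0 : ℕ, ∀ t : Fin (k + 1), ∃ (j : Fin (m + 1)) (c : BCTree n (m + 1)),
          children t = BCTree.cut i j c ∧ (j : ℕ) = j0 + (t : ℕ))

/-! ### Auxiliary development -/

noncomputable section

open Classical in
/-- Clamp `v` into `[lo, hi]` (same form as used in `playAlloc`). -/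
private def clampv (lo hi v : ℝ) : ℝ := max lo (min v hi)

private lemma clampv_le {lo hi v : ℝ} (h : lo ≤ hi) : clampv lo hi v ≤ hi := by
  simp only [clampv, max_le_iff]
  exact ⟨h, min_le_right _ _⟩

private lemma le_clampv {lo hi v : ℝ} : lo ≤ clampv lo hi v := le_max_left _ _

private lemma clampv_of_mem {lo hi v : ℝ} (h1 : lo ≤ v) (h2 : v ≤ hi) :
    clampv lo hi v = v := by
  simp only [clampv]
  rw [min_eq_left h2, max_eq_right h1]

/-- View a `ℕ`-indexed family of reals as a `Fin`-indexed one. -/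
private def toFin {N : ℕ} (D : ℕ → ℝ) : Fin N → ℝ := fun t => D t.val

/-- `ℕ`-version of `insertPt`. -/
private def insN (D : ℕ → ℝ) (p : ℕ) (y : ℝ) : ℕ → ℝ :=
  fun x => if x ≤ p then D x else if x = p + 1 then y else D (x - 1)

private lemma insertPt_toFin {m : ℕ} (D : ℕ → ℝ) (j : Fin (m+1)) (y : ℝ) :
    insertPt (toFin D) j y = toFin (insN D j.val y) := by
  funext t
  simp only [insertPt, toFin, insN]
  split_ifs <;> rfl

/-- A monotone renumbering of cut points recording how the pieces of the original
partition are refined in the transformed protocol. -/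
structure PMap (m m' : ℕ) : Type where
  f : ℕ → ℕ
  mono : StrictMono f
  zero : f 0 = 0
  last : f (m+1) = m'+1

private lemma PMap.mono' {m m' : ℕ} (ψ : PMap m m') {a b : ℕ} (h : a ≤ b) :
    ψ.f a ≤ ψ.f b := ψ.mono.monotone h

private lemma PMap.le {m m' : ℕ} (ψ : PMap m m') {x : ℕ} (h : x ≤ m + 1) :
    ψ.f x ≤ m' + 1 := by
  have h2 := ψ.last
  have := ψ.mono' h
  omega

private lemma PMap.pos {m m' : ℕ} (ψ : PMap m m') {x : ℕ} (h : 0 < x) : 0 < ψ.f x := by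
  have := ψ.mono (show 0 < x from h)
  omega

/-- Identity renumbering. -/
private def psiId : PMap 0 0 where
  f := id
  mono := strictMono_id
  zero := rfl
  last := rfl

/-- Raw renumbering update for a cut. -/
private def psiCutF (f : ℕ → ℕ) (j r : ℕ) : ℕ → ℕ :=
  fun x => if x ≤ j then f x else if x = j + 1 then f j + r + 1 else f (x-1) + 1

/-- Raw renumbering update for a choose. -/
private def psiChF (f : ℕ → ℕ) (k : ℕ) : ℕ → ℕ :=
  fun x => if x = 0 then 0 else f x + (k+1)

/-- Renumbering update for a cut into original piece `j`, realized as a cut into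
new piece `ψ.f j + r`. -/
private def psiCut {m m' : ℕ} (ψ : PMap m m') (j r : ℕ) (hj : j ≤ m)
    (hr : ψ.f j + r < ψ.f (j+1)) : PMap (m+1) (m'+1) where
  f := psiCutF ψ.f j r
  mono := by
    intro a b hab
    have hm := ψ.mono
    simp only [psiCutF]
    split_ifs with h1 h2 h3 h4 h5 h6 h7 <;>
      first
        | exact ψ.mono (by omega)
        | (have e1 := ψ.mono' (show a ≤ j from by omega)
           have e2 := ψ.mono' (show j + 1 ≤ b - 1 from by omega); omega)
        | (have e2 := ψ.mono' (show j + 1 ≤ b - 1 from by omega); omega)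
        | (have e1 := ψ.mono' (show a ≤ j from by omega); omega)
        | (have := ψ.mono (show a - 1 < b - 1 from by omega); omega)
        | omega
  zero := by simp [psiCutF, ψ.zero]
  last := by
    have h1 : ¬ (m + 2 ≤ j) := by omega
    have h2 : m + 2 ≠ j + 1 := by omega
    simp only [psiCutF, h1, h2, if_false]
    have := ψ.last
    simp only [show m + 2 - 1 = m + 1 from rfl, this]
  
/-- Renumbering update for a choose node with `k+1` branches: `k` padding cuts plus
one signalling cut, all inside original piece `0`. -/
private def psiCh {m m' : ℕ} (ψ : PMap m m') (k : ℕ) : PMap m (m'+k+1) where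
  f := psiChF ψ.f k
  mono := by
    intro a b hab
    simp only [psiChF]
    split_ifs with h1 h2 h3
    · omega
    · omega
    · have := ψ.pos (show 0 < b from by omega); omega
    · have := ψ.mono hab; omega
  zero := by simp [psiChF]
  last := by simp [psiChF, ψ.last]; omega

/-- Collapse map: the original piece containing a given new piece. -/
private def clps {m m' : ℕ} (ψ : PMap m m') (u : ℕ) : ℕ :=
  Nat.findGreatest (fun t => ψ.f t ≤ u) m

/-- `k` nested padding cuts by agent `x`, all into piece `0`. -/
private def padTree {n : ℕ} (x : Fin n) : (k : ℕ) → {m' : ℕ} → BCTree n (m' + k) → BCTree n m'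
  | 0, _, X => X
  | k+1, m', X => padTree x k (BCTree.cut x ⟨0, by omega⟩ X)

/-- The transformation into intermediate form. -/
private def convT {n : ℕ} : {m : ℕ} → BCTree n m → {m' : ℕ} → PMap m m' → BCTree n m'
  | m, .leaf alloc, _, ψ =>
      .leaf (fun u => alloc ⟨clps ψ u.val, Nat.lt_succ_of_le (Nat.findGreatest_le m)⟩)
  | _, .cut a j child, m', ψ =>
      BCTree.choose a (k := ψ.f (j.val+1) - ψ.f j.val - 1) (fun r =>
        BCTree.cut a
          ⟨ψ.f j.val + r.val, by
            have h1 : ψ.f j.val < ψ.f (j.val+1) := ψ.mono (Nat.lt_succ_self _)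
            have h2 := ψ.le (show j.val + 1 ≤ _ + 1 from Nat.succ_le_succ (Nat.le_of_lt_succ j.isLt))
            have h3 := r.isLt
            omega⟩
          (convT child (psiCut ψ j.val r.val (Nat.le_of_lt_succ j.isLt)
            (by have h1 : ψ.f j.val < ψ.f (j.val+1) := ψ.mono (Nat.lt_succ_self _)
                have h3 := r.isLt
                omega))))
  | _, @BCTree.choose _ _ x k children, m', ψ =>
      padTree x k (BCTree.choose x (fun t : Fin (k+1) =>
        BCTree.cut x ⟨t.val, by have := t.isLt; omega⟩
          (convT (children t) (psiCh ψ k))))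

private lemma padTree_iform {n : ℕ} (x : Fin n) :
    ∀ (k : ℕ) {m' : ℕ} (X : BCTree n (m' + k)),
      X.intermediateForm → (padTree x k X).intermediateForm
  | 0, _, X, h => h
  | k+1, m', X, h => padTree_iform x k _ (by simpa [BCTree.intermediateForm] using h)

private lemma convT_iform {n : ℕ} : ∀ {m : ℕ} (B : BCTree n m) {m' : ℕ} (ψ : PMap m m'),
    (convT B ψ).intermediateForm := by
  intro m B
  induction B with
  | leaf alloc => intro m' ψ; simp [convT, BCTree.intermediateForm]
  | cut a j child ih =>
      intro m' ψ
      refine ⟨fun r => ih _, Or.inr ⟨ψ.f j.val, fun r => ⟨_, _, rfl, rfl⟩⟩⟩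
  | choose x children ih =>
      intro m' ψ
      refine padTree_iform x _ _ ?_
      refine ⟨fun t => ih t _, Or.inr ⟨0, fun t => ⟨_, _, rfl, by simp⟩⟩⟩

end
noncomputable section

/-! ### Values of allocations -/

/-- The total value agent `a` receives from an interval-assignment list. -/
private def valsum {n : ℕ} (V : CakeValuation) (a : Fin n) (L : List (ℝ × ℝ × Fin n)) : ℝ :=
  (L.map fun q => if q.2.2 = a then V.v q.1 q.2.1 else 0).sum

private lemma pieceValue_allocOf {n : ℕ} (V : CakeValuation) (a : Fin n)
    (L : List (ℝ × ℝ × Fin n)) : pieceValue V (allocOf L a) = valsum V a L := by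
  induction L with
  | nil => rfl
  | cons q L ih =>
      simp only [allocOf, pieceValue, valsum, List.filter_cons] at *
      by_cases hq : q.2.2 = a
      · simp [hq] at *; linarith
      · simp [hq] at *; linarith

private lemma valsum_map {n : ℕ} (V : CakeValuation) (a : Fin n) {N : ℕ}
    (g : Fin N → ℝ × ℝ × Fin n) :
    valsum V a ((List.finRange N).map g)
      = ∑ t : Fin N, if (g t).2.2 = a then V.v (g t).1 (g t).2.1 else 0 := by
  unfold valsum
  rw [List.map_map, Fin.sum_univ_def]
  rfl

/-! ### Partition invariants -/

/-- Invariants of the running family of cut points (`ℕ`-indexed). -/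
private structure DInv (m' : ℕ) (D : ℕ → ℝ) : Prop where
  mono : ∀ x y, x ≤ y → y ≤ m' + 1 → D x ≤ D y
  lo : 0 ≤ D 0
  hi : D (m' + 1) ≤ 1

private lemma DInv.lo' {m' : ℕ} {D : ℕ → ℝ} (h : DInv m' D) {x : ℕ} (hx : x ≤ m' + 1) :
    0 ≤ D x := le_trans h.lo (h.mono 0 x (Nat.zero_le _) hx)

private lemma DInv.hi' {m' : ℕ} {D : ℕ → ℝ} (h : DInv m' D) {x : ℕ} (hx : x ≤ m' + 1) :
    D x ≤ 1 := le_trans (h.mono x (m'+1) hx le_rfl) h.hi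

private lemma insN_inv {m' : ℕ} {D : ℕ → ℝ} (h : DInv m' D) {p : ℕ} (hp : p ≤ m') {y : ℝ}
    (hy1 : D p ≤ y) (hy2 : y ≤ D (p+1)) : DInv (m'+1) (insN D p y) where
  mono := by
    intro x z hxz hz
    simp only [insN]
    split_ifs <;>
      first
        | exact h.mono _ _ (by omega) (by omega)
        | exact le_rfl
        | (have a1 := h.mono x p (by omega) (by omega); linarith)
        | (have a1 := h.mono (p+1) (z-1) (by omega) (by omega); linarith)
        | (have a1 := h.mono (x-1) p (by omega) (by omega); linarith)
        | (have a1 := h.mono (p+1) z (by omega) (by omega); linarith)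
        | omega
  lo := by simpa [insN] using h.lo
  hi := by
    have h1 : ¬ (m' + 2 ≤ p) := by omega
    have h2 : ¬ (m' + 2 = p + 1) := by omega
    simpa [insN, h1, h2, show m' + 1 ≠ p by omega] using h.hi

/-! ### Telescoping sums of values -/

private lemma V_refl (V : CakeValuation) {x : ℝ} (h0 : 0 ≤ x) (h1 : x ≤ 1) :
    V.v x x = 0 := by
  have := V.additive x x x h0 le_rfl le_rfl h1
  linarith

private lemma telescope (V : CakeValuation) {m' : ℕ} {D : ℕ → ℝ} (h : DInv m' D)
    (p : ℕ) : ∀ (q : ℕ), p ≤ q → q ≤ m' + 1 →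
    ∑ x ∈ Finset.Ico p q, V.v (D x) (D (x+1)) = V.v (D p) (D q) := by
  intro q hpq
  induction q, hpq using Nat.le_induction with
  | base =>
      intro hq
      rw [Finset.Ico_self, Finset.sum_empty, V_refl V (h.lo' hq) (h.hi' hq)]
  | succ q hpq ih =>
      intro hq1
      rw [Finset.sum_Ico_succ_top hpq, ih (by omega)]
      exact V.additive (D p) (D q) (D (q+1)) (h.lo' (by omega))
        (h.mono p q hpq (by omega)) (h.mono q (q+1) (by omega) hq1) (h.hi' hq1)

private lemma regroup (G : ℕ → ℝ) (f : ℕ → ℕ) (hm : Monotone f) :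
    ∀ (M : ℕ), ∑ t ∈ Finset.range (M+1), ∑ u ∈ Finset.Ico (f t) (f (t+1)), G u
      = ∑ u ∈ Finset.Ico (f 0) (f (M+1)), G u := by
  intro M
  induction M with
  | zero => simp
  | succ M ih =>
      rw [Finset.sum_range_succ, ih,
        Finset.sum_Ico_consecutive _ (hm (Nat.zero_le _)) (hm (by omega))]

private lemma clps_eq {m m' : ℕ} (ψ : PMap m m') {x u : ℕ} (hx : x ≤ m)
    (h1 : ψ.f x ≤ u) (h2 : u < ψ.f (x+1)) : clps ψ u = x := by
  unfold clps
  rw [Nat.findGreatest_eq_iff]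
  refine ⟨hx, fun _ => h1, fun t ht htm => ?_⟩
  have := ψ.mono' (show x + 1 ≤ t from ht)
  omega

/-- The key computation at leaves: values are preserved under refining the partition
and collapsing the allocation. -/
private lemma leaf_sums {n : ℕ} (V : CakeValuation) (a : Fin n) {m m' : ℕ}
    (ψ : PMap m m') {D : ℕ → ℝ} (hD : DInv m' D) (A : ℕ → Fin n) :
    ∑ x ∈ Finset.range (m+1), (if A x = a then V.v (D (ψ.f x)) (D (ψ.f (x+1))) else 0)
      = ∑ u ∈ Finset.Ico (ψ.f 0) (ψ.f (m+1)),
          (if A (clps ψ u) = a then V.v (D u) (D (u+1)) else 0) := by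
  rw [← regroup _ _ ψ.mono.monotone]
  refine Finset.sum_congr rfl ?_
  intro x hx
  rw [Finset.mem_range] at hx
  have hfib : ∀ u ∈ Finset.Ico (ψ.f x) (ψ.f (x+1)),
      (if A (clps ψ u) = a then V.v (D u) (D (u+1)) else 0)
        = (if A x = a then V.v (D u) (D (u+1)) else 0) := by
    intro u hu
    rw [Finset.mem_Ico] at hu
    rw [clps_eq ψ (by omega) hu.1 hu.2]
  rw [Finset.sum_congr rfl hfib]
  by_cases hAx : A x = a
  · simp only [hAx, if_true]
    exact (telescope V hD (ψ.f x) (ψ.f (x+1)) (ψ.mono' (by omega)) (ψ.le (by omega))).symm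
  · simp [hAx]

end
noncomputable section
open Classical

/-! ### Padding cuts: state evolution -/

/-- Partition/history state after `k` padding cuts into piece `0`, with raw cut values
given by the oracle `F`. -/
private def padStateF (F : Hist → ℝ) : (k : ℕ) → (D : ℕ → ℝ) → Hist → ((ℕ → ℝ) × Hist)
  | 0, D, h' => (D, h')
  | k+1, D, h' =>
      let P := padStateF F k D h'
      let y := clampv (P.1 0) (P.1 1) (F P.2)
      (insN P.1 0 y, P.2 ++ [Sum.inl y])

private lemma padStateF_hist (F : Hist → ℝ) : ∀ (k : ℕ) (D : ℕ → ℝ) (h' : Hist),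
    ∃ L : List (ℝ ⊕ ℕ), (padStateF F k D h').2 = h' ++ L ∧ L.length = k ∧
      (∀ x, x < k → L[x]? = some (Sum.inl
        (clampv ((padStateF F x D h').1 0) ((padStateF F x D h').1 1)
          (F (padStateF F x D h').2)))) := by
  intro k
  induction k with
  | zero => intro D h'; exact ⟨[], by simp [padStateF]⟩
  | succ k ih =>
      intro D h'
      obtain ⟨L, hL1, hL2, hL3⟩ := ih D h'
      refine ⟨L ++ [Sum.inl (clampv ((padStateF F k D h').1 0) ((padStateF F k D h').1 1)
          (F (padStateF F k D h').2))], ?_, by simp [hL2], ?_⟩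
      · simp [padStateF, hL1]
      · intro x hx
        rcases Nat.lt_or_ge x k with hxk | hxk
        · rw [List.getElem?_append_left (by omega)]
          exact hL3 x hxk
        · have hxe : x = k := by omega
          subst hxe
          rw [List.getElem?_append_right (by omega)]
          simp [hL2]

private lemma padStateF_fst_zero (F : Hist → ℝ) : ∀ (k : ℕ) (D : ℕ → ℝ) (h' : Hist),
    (padStateF F k D h').1 0 = D 0 := by
  intro k
  induction k with
  | zero => intro D h'; rfl
  | succ k ih => intro D h'; simp [padStateF, insN, ih]

private lemma padStateF_fst_high (F : Hist → ℝ) : ∀ (k : ℕ) (D : ℕ → ℝ) (h' : Hist)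
    (x : ℕ), 1 ≤ x → (padStateF F k D h').1 (x + k) = D x := by
  intro k
  induction k with
  | zero => intro D h' x _; rfl
  | succ k ih =>
      intro D h' x hx
      have h1 : ¬ (x + (k+1) ≤ 0) := by omega
      have h2 : ¬ (x + (k+1) = 0 + 1) := by omega
      simp only [padStateF, insN, h1, h2, if_false]
      have : x + (k+1) - 1 = x + k := by omega
      rw [this, ih D h' x hx]

private lemma padStateF_inv (F : Hist → ℝ) {m' : ℕ} {D : ℕ → ℝ} (hD : DInv m' D) :
    ∀ (k : ℕ) (h' : Hist), DInv (m' + k) (padStateF F k D h').1 := by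
  intro k
  induction k with
  | zero => intro h'; exact hD
  | succ k ih =>
      intro h'
      have h1 := ih h'
      exact insN_inv h1 (by omega) le_clampv
        (clampv_le (h1.mono 0 1 (by omega) (by omega)))

private lemma padStateF_len (F : Hist → ℝ) (k : ℕ) (D : ℕ → ℝ) (h' : Hist) :
    (padStateF F k D h').2.length = h'.length + k := by
  obtain ⟨L, hL1, hL2, _⟩ := padStateF_hist F k D h'
  simp [hL1, hL2]

private lemma padStateF_congr {F G : Hist → ℝ} : ∀ (k : ℕ) (D : ℕ → ℝ) (h' : Hist),
    (∀ a, a < k → F ((padStateF G a D h').2) = G ((padStateF G a D h').2)) →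
    padStateF F k D h' = padStateF G k D h' := by
  intro k
  induction k with
  | zero => intro D h' _; rfl
  | succ k ih =>
      intro D h' hFG
      have h1 : padStateF F k D h' = padStateF G k D h' :=
        ih D h' (fun a ha => hFG a (by omega))
      simp only [padStateF, h1, hFG k (by omega)]

/-! ### The sub-piece index -/

/-- Index of the sub-piece (of a refined original piece) containing a given point. -/
private def subIdx (D : ℕ → ℝ) (p len : ℕ) (y : ℝ) : ℕ :=
  Nat.findGreatest (fun r => D (p + r) ≤ y) (len - 1)

private lemma subIdx_le (D : ℕ → ℝ) (p len : ℕ) (y : ℝ) :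
    subIdx D p len y ≤ len - 1 := Nat.findGreatest_le _

private lemma subIdx_spec {D : ℕ → ℝ} {p len : ℕ} {y : ℝ} (h0 : D (p + 0) ≤ y) :
    D (p + subIdx D p len y) ≤ y := by
  unfold subIdx
  exact Nat.findGreatest_spec (P := fun r => D (p + r) ≤ y) (Nat.zero_le _) h0

private lemma subIdx_gt {D : ℕ → ℝ} {p len : ℕ} {y : ℝ} {r : ℕ}
    (h : subIdx D p len y < r) (h2 : r ≤ len - 1) : ¬ (D (p + r) ≤ y) := by
  unfold subIdx at h
  exact Nat.findGreatest_is_greatest (P := fun r => D (p + r) ≤ y) h h2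

/-- The fundamental clamping property: clamping into the sub-piece selected by
`subIdx` recovers the clamp into the whole original piece. -/
private lemma subIdx_clamp {m' : ℕ} {D : ℕ → ℝ} (hD : DInv m' D) {p q : ℕ}
    (hpq : p < q) (hq : q ≤ m' + 1) (v : ℝ) :
    D (p + subIdx D p (q - p) (clampv (D p) (D q) v)) ≤ clampv (D p) (D q) v ∧
    clampv (D p) (D q) v ≤ D (p + subIdx D p (q - p) (clampv (D p) (D q) v) + 1) ∧
    clampv (D (p + subIdx D p (q - p) (clampv (D p) (D q) v)))
      (D (p + subIdx D p (q - p) (clampv (D p) (D q) v) + 1)) v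
      = clampv (D p) (D q) v := by
  set y := clampv (D p) (D q) v with hy
  set r := subIdx D p (q - p) y with hr
  have hpq' : D p ≤ D q := hD.mono p q (by omega) hq
  have h2 : D (p + r) ≤ y := subIdx_spec (by simpa using (le_clampv (lo := D p) (hi := D q) (v := v)))
  have hrle : r ≤ q - p - 1 := subIdx_le _ _ _ _
  have h3 : y ≤ D (p + r + 1) := by
    rcases Nat.lt_or_ge r (q - p - 1) with hlt | hge
    · by_contra hcon
      push_neg at hcon
      exact subIdx_gt (len := q - p) (r := r + 1) (by omega) (by omega) (le_of_lt hcon)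
    · have hqq : p + r + 1 = q := by omega
      rw [hqq]
      exact clampv_le hpq'
  refine ⟨h2, h3, ?_⟩
  have hm1 : D p ≤ D (p + r) := hD.mono p (p + r) (by omega) (by omega)
  have hm2 : D (p + r + 1) ≤ D q := hD.mono (p + r + 1) q (by omega) hq
  have hm3 : D (p + r) ≤ D (p + r + 1) := hD.mono _ _ (by omega) (by omega)
  rcases le_total v (D p) with hv | hv
  · have hyv : y = D p := by
      simp only [hy, clampv]
      rw [min_eq_left (le_trans hv hpq'), max_eq_left hv]
    have he : D (p + r) = D p := le_antisymm (hyv ▸ h2) hm1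
    rw [hyv, ← he]
    simp only [clampv]
    rw [min_eq_left (by linarith), max_eq_left (by linarith)]
  · rcases le_total v (D q) with hv2 | hv2
    · have hyv : y = v := clampv_of_mem hv hv2
      rw [hyv] at h2 h3 ⊢
      exact clampv_of_mem h2 h3
    · have hyv : y = D q := by
        simp only [hy, clampv]
        rw [min_eq_right hv2, max_eq_right hpq']
      rw [hyv] at h2 h3 ⊢
      have he : D (p + r + 1) = D q := le_antisymm hm2 h3
      simp only [clampv]
      rw [he, min_eq_right hv2, max_eq_right h2]

end
noncomputable section
open Classical

private def getCut : ℝ ⊕ ℕ → ℝ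
  | Sum.inl y => y
  | Sum.inr _ => 0

private def getChoose : ℝ ⊕ ℕ → ℕ
  | Sum.inr t => t
  | Sum.inl _ => 0

/-- The original cut points induced by a renumbering. -/
private def pci {m m' : ℕ} (ψ : PMap m m') (D : ℕ → ℝ) : ℕ → ℝ := fun z => D (ψ.f z)

private lemma pci_psiCut {m m' : ℕ} (ψ : PMap m m') (D : ℕ → ℝ) (j r : ℕ)
    (hj : j ≤ m) (hr : ψ.f j + r < ψ.f (j+1)) (y : ℝ) :
    pci (psiCut ψ j r hj hr) (insN D (ψ.f j + r) y) = insN (pci ψ D) j y := by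
  funext z
  simp only [pci, psiCut, psiCutF, insN]
  split_ifs <;>
    first
      | rfl
      | omega
      | (have := ψ.mono' (show z ≤ j from by omega); omega)
      | (have := ψ.mono' (show j + 1 ≤ z - 1 from by omega); omega)
      | (have := ψ.mono' (show j + 1 ≤ z - 1 from by omega); congr 1; omega)
      | (congr 1; omega)

private lemma pci_psiCh {m m' : ℕ} (ψ : PMap m m') (D : ℕ → ℝ) (k : ℕ) (C : ℕ → ℝ)
    (hC0 : C 0 = D 0) (hCh : ∀ x, 1 ≤ x → C (x + k) = D x)
    (t : ℕ) (ht : t ≤ k) (w : ℝ) :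
    pci (psiCh ψ k) (insN C t w) = pci ψ D := by
  funext z
  simp only [pci, psiCh, psiChF, insN]
  by_cases h1 : z = 0
  · subst h1
    simp [hC0, ψ.zero]
  · have hz : 1 ≤ z := by omega
    have hfz : 1 ≤ ψ.f z := ψ.pos (by omega)
    have e1 : ¬ (ψ.f z + (k+1) ≤ t) := by omega
    have e2 : ¬ (ψ.f z + (k+1) = t + 1) := by omega
    simp only [if_neg h1, e1, e2, if_false]
    have e3 : ψ.f z + (k+1) - 1 = ψ.f z + k := by omega
    rw [e3, hCh _ hfz]

private lemma padTree_succ {n : ℕ} (x : Fin n) (k : ℕ) {m' : ℕ}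
    (X : BCTree n (m' + (k+1))) :
    padTree x (k+1) X = padTree x k (BCTree.cut x ⟨0, by omega⟩ X) := rfl

private lemma padPlay {n : ℕ} (x : Fin n) (σ' : Fin n → BCStrategy) :
    ∀ (k : ℕ) {m' : ℕ} (X : BCTree n (m' + k)) (D : ℕ → ℝ) (h' : Hist),
    (padTree x k X).playAlloc (toFin D) h' σ'
      = X.playAlloc (toFin (padStateF ((σ' x).cutAt) k D h').1)
          (padStateF ((σ' x).cutAt) k D h').2 σ' := by
  intro k
  induction k with
  | zero => intro m' X D h'; rfl
  | succ k ih =>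
      intro m' X D h'
      rw [padTree_succ, ih]
      show BCTree.playAlloc _ _ _ _ = _
      simp only [BCTree.playAlloc, padStateF, insertPt_toFin]
      rfl

private def encPad : (k : ℕ) → (D : ℕ → ℝ) → List (ℝ ⊕ ℕ) → (ℕ → ℝ)
  | 0, D, _ => D
  | k+1, D, M =>
      insN (encPad k D M) 0
        (match M[k]? with
          | some (Sum.inl z) => z
          | _ => 0)

private lemma encPad_eq (F : Hist → ℝ) : ∀ (k : ℕ) (D : ℕ → ℝ) (h' : Hist)
    (M : List (ℝ ⊕ ℕ)),
    (∀ a, a < k → M[a]? = some (Sum.inl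
      (clampv ((padStateF F a D h').1 0) ((padStateF F a D h').1 1)
        (F ((padStateF F a D h').2))))) →
    encPad k D M = (padStateF F k D h').1 := by
  intro k
  induction k with
  | zero => intro D h' M _; rfl
  | succ k ih =>
      intro D h' M hM
      have h1 : encPad k D M = (padStateF F k D h').1 :=
        ih D h' M (fun a ha => hM a (by omega))
      simp only [encPad, h1, hM k (by omega), padStateF]

/-- The moves at a given history of the original game, replayed from the strategy
profile of the transformed game. -/
private def wk {n : ℕ} (σ' : Fin n → BCStrategy) :
    {m : ℕ} → BCTree n m → (ℕ → ℕ) → (ℕ → ℝ) → Hist → Hist → Hist → (ℝ ⊕ ℕ)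
  | _, .leaf _, _, _, _, _, _ => Sum.inl 0
  | _, .cut b j child, fN, D, h, h', g =>
      let r := (σ' b).chooseAt h' % (fN (j.val+1) - fN j.val - 1 + 1)
      let y := clampv (D (fN j.val + r)) (D (fN j.val + r + 1))
        ((σ' b).cutAt (h' ++ [Sum.inr r]))
      if g = h then Sum.inl y
      else wk σ' child (psiCutF fN j.val r)
        (insN D (fN j.val + r) y) (h ++ [Sum.inl y]) ((h' ++ [Sum.inr r]) ++ [Sum.inl y]) g
  | _, @BCTree.choose _ _ x k children, fN, D, h, h', g =>
      let P := padStateF ((σ' x).cutAt) k D h'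
      let t := (σ' x).chooseAt P.2 % (k+1)
      let w := clampv (P.1 t) (P.1 (t+1)) ((σ' x).cutAt (P.2 ++ [Sum.inr t]))
      if g = h then Sum.inr t
      else wk σ' (children ⟨t, Nat.mod_lt _ (Nat.succ_pos k)⟩) (psiChF fN k)
        (insN P.1 t w) (h ++ [Sum.inr t]) ((P.2 ++ [Sum.inr t]) ++ [Sum.inl w]) g

/-- The strategy of agent `i` in the transformed game, replaying a strategy `s`
of the original game (driven by the remaining suffix of the new history). -/
private def encM {n : ℕ} (s : BCStrategy) :
    {m : ℕ} → BCTree n m → (ℕ → ℕ) → (ℕ → ℝ) → Hist → Hist → (ℝ ⊕ ℕ)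
  | _, .leaf _, _, _, _, _ => Sum.inl 0
  | _, .cut _ j child, fN, D, h, g' =>
      match g' with
      | [] => Sum.inr (subIdx D (fN j.val) (fN (j.val+1) - fN j.val)
          (clampv (D (fN j.val)) (D (fN (j.val+1))) (s.cutAt h)))
      | [Sum.inr _] => Sum.inl (s.cutAt h)
      | Sum.inr r :: Sum.inl yy :: rest =>
          encM s child (psiCutF fN j.val r)
            (insN D (fN j.val + r) yy) (h ++ [Sum.inl yy]) rest
      | _ => Sum.inl 0
  | _, @BCTree.choose _ _ _ k children, fN, D, h, g' =>
      if g'.length < k then Sum.inl 0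
      else
        match g'.drop k with
        | [] => Sum.inr (s.chooseAt h)
        | Sum.inr _ :: [] => Sum.inl 0
        | Sum.inr t :: Sum.inl w :: rest =>
            encM s (children ⟨t % (k+1), Nat.mod_lt _ (Nat.succ_pos k)⟩) (psiChF fN k)
              (insN (encPad k D g') (t % (k+1)) w) (h ++ [Sum.inr (t % (k+1))]) rest
        | _ => Sum.inl 0

end
noncomputable section
open Classical

private lemma ne_of_len {α : Type*} {g h : List α} (hg : h.length + 1 ≤ g.length) :
    g ≠ h := fun e => by subst e; omega

private lemma clamp_sub {m' : ℕ} {D : ℕ → ℝ} (hD : DInv m' D) {p r q : ℕ}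
    (h2 : p + r + 1 ≤ q) (hq : q ≤ m' + 1) (v : ℝ) :
    clampv (D p) (D q) (clampv (D (p+r)) (D (p+r+1)) v) = clampv (D (p+r)) (D (p+r+1)) v :=
  clampv_of_mem (le_trans (hD.mono p (p+r) (by omega) (by omega)) le_clampv)
    (le_trans (clampv_le (hD.mono (p+r) (p+r+1) (by omega) (by omega)))
      (hD.mono (p+r+1) q h2 hq))

private lemma clampv_def (lo hi v : ℝ) : max lo (min v hi) = clampv lo hi v := rfl

private lemma master1 {n : ℕ} (V : CakeValuation) (a : Fin n) (i : Fin n) (s : BCStrategy) :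
    ∀ {m : ℕ} (B : BCTree n m) {m' : ℕ} (ψ : PMap m m') (D : ℕ → ℝ), DInv m' D →
      ∀ (h h' : Hist) (σ σ' : Fin n → BCStrategy),
      σ i = s →
      (∀ g', (σ' i).cutAt (h' ++ g') = getCut (encM s B ψ.f D h g')
          ∧ (σ' i).chooseAt (h' ++ g') = getChoose (encM s B ψ.f D h g')) →
      (∀ j, j ≠ i → ∀ g : Hist, h.length ≤ g.length →
          (σ j).cutAt g = getCut (wk σ' B ψ.f D h h' g)
        ∧ (σ j).chooseAt g = getChoose (wk σ' B ψ.f D h h' g)) →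
      valsum V a (B.playAlloc (toFin (pci ψ D)) h σ)
        = valsum V a ((convT B ψ).playAlloc (toFin D) h' σ') := by
  intro m B
  induction B with
  | @leaf m alloc =>
      intro m' ψ D hD h h' σ σ' hσi hENC hADV
      simp only [convT, BCTree.playAlloc]
      rw [valsum_map, valsum_map]
      set A : ℕ → Fin n := fun z => alloc ⟨min z m, by omega⟩ with hA
      have hL : ∑ t : Fin (m+1),
          (if alloc t = a then V.v (toFin (pci ψ D) t.castSucc) (toFin (pci ψ D) t.succ) else 0)
          = ∑ x ∈ Finset.range (m+1),
            (if A x = a then V.v (D (ψ.f x)) (D (ψ.f (x+1))) else 0) := by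
        rw [← Fin.sum_univ_eq_sum_range]
        refine Finset.sum_congr rfl ?_
        intro t _
        have e1 : A t.val = alloc t := by
          have e2 : (⟨min t.val m, by omega⟩ : Fin (m+1)) = t := by
            ext; simp; omega
          rw [hA]; simp only [e2]
        rw [e1]
        rfl
      have hR : ∑ u : Fin (m'+1),
          (if alloc ⟨clps ψ u.val, Nat.lt_succ_of_le (Nat.findGreatest_le m)⟩ = a
            then V.v (toFin D u.castSucc) (toFin D u.succ) else 0)
          = ∑ u ∈ Finset.range (m'+1),
            (if A (clps ψ u) = a then V.v (D u) (D (u+1)) else 0) := by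
        rw [← Fin.sum_univ_eq_sum_range]
        refine Finset.sum_congr rfl ?_
        intro u _
        have h2 : clps ψ u.val ≤ m := Nat.findGreatest_le m
        have e1 : A (clps ψ u.val)
            = alloc ⟨clps ψ u.val, Nat.lt_succ_of_le (Nat.findGreatest_le m)⟩ := by
          have e2 : (⟨min (clps ψ u.val) m, by omega⟩ : Fin (m+1))
              = ⟨clps ψ u.val, Nat.lt_succ_of_le (Nat.findGreatest_le m)⟩ := by
            ext; simp; omega
          rw [hA]; simp only [e2]
        rw [e1]
        rfl
      rw [hL, hR, leaf_sums V a ψ hD A, ψ.zero, ψ.last, ← Finset.range_eq_Ico]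
  | @cut m b j child ih =>
      intro m' ψ D hD h h' σ σ' hσi hENC hADV
      have hjm : j.val + 1 ≤ m + 1 := j.isLt
      have hpq : ψ.f j.val < ψ.f (j.val+1) := ψ.mono (Nat.lt_succ_self _)
      have hqle : ψ.f (j.val+1) ≤ m' + 1 := ψ.le hjm
      simp only [convT, BCTree.playAlloc, insertPt_toFin]
      simp only [toFin, Fin.coe_castSucc, Fin.val_succ, clampv_def, pci]
      set r : ℕ := (σ' b).chooseAt h' % (ψ.f (j.val+1) - ψ.f j.val - 1 + 1) with hrdef
      have hrK : r < ψ.f (j.val+1) - ψ.f j.val - 1 + 1 := by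
        rw [hrdef]; exact Nat.mod_lt _ (Nat.succ_pos _)
      set y' : ℝ := clampv (D (ψ.f j.val + r)) (D (ψ.f j.val + r + 1))
        ((σ' b).cutAt (h' ++ [Sum.inr r])) with hy'def
      have hyy : clampv (D (ψ.f j.val)) (D (ψ.f (j.val+1))) ((σ b).cutAt h) = y' := by
        by_cases hbi : b = i
        · subst hbi
          have e0 := (hENC []).2
          have e1 := (hENC [Sum.inr r]).1
          simp only [List.append_nil, encM, getChoose] at e0
          simp only [encM, getCut] at e1
          have hsle := subIdx_le D (ψ.f j.val) (ψ.f (j.val+1) - ψ.f j.val)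
            (clampv (D (ψ.f j.val)) (D (ψ.f (j.val+1))) (s.cutAt h))
          have hre : r = subIdx D (ψ.f j.val) (ψ.f (j.val+1) - ψ.f j.val)
              (clampv (D (ψ.f j.val)) (D (ψ.f (j.val+1))) (s.cutAt h)) := by
            rw [hrdef, e0]
            exact Nat.mod_eq_of_lt (by omega)
          rw [hy'def, e1, hσi, hre]
          exact ((subIdx_clamp hD hpq hqle (s.cutAt h)).2.2).symm
        · have e1 := (hADV b hbi h le_rfl).1
          simp [wk, getCut] at e1
          rw [e1, hy'def]
          exact clamp_sub hD (by omega) hqle _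
      rw [hyy]
      rw [← pci_psiCut ψ D j.val r (Nat.le_of_lt_succ j.isLt) (by omega) y']
      refine ih (psiCut ψ j.val r (Nat.le_of_lt_succ j.isLt) (by omega))
        (insN D (ψ.f j.val + r) y')
        (insN_inv hD (by omega) le_clampv (clampv_le (hD.mono _ _ (by omega) (by omega))))
        (h ++ [Sum.inl y']) ((h' ++ [Sum.inr r]) ++ [Sum.inl y']) σ σ' hσi ?_ ?_
      · intro g'
        have e2 := hENC (Sum.inr r :: Sum.inl y' :: g')
        simp only [encM] at e2
        simpa only [List.append_assoc, List.cons_append, List.singleton_append,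
          List.nil_append] using! e2
      · intro j' hj' g hg
        have hgne : g ≠ h := ne_of_len (by simpa using hg)
        have e3 := hADV j' hj' g (by simp at hg; omega)
        simpa only [wk, if_neg hgne] using! e3
  | @choose m x k children ih =>
      intro m' ψ D hD h h' σ σ' hσi hENC hADV
      obtain ⟨L, hL1, hL2, hL3⟩ := padStateF_hist ((σ' x).cutAt) k D h'
      simp only [convT]
      rw [padPlay]
      simp only [BCTree.playAlloc, insertPt_toFin]
      simp only [toFin, Fin.coe_castSucc, Fin.val_succ, clampv_def, pci]
      set P := padStateF ((σ' x).cutAt) k D h' with hP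
      set t' : ℕ := (σ' x).chooseAt P.2 % (k+1) with ht'def
      have ht'k : t' < k + 1 := by rw [ht'def]; exact Nat.mod_lt _ (Nat.succ_pos _)
      set w : ℝ := clampv (P.1 t') (P.1 (t'+1)) ((σ' x).cutAt (P.2 ++ [Sum.inr t'])) with hwdef
      have hPinv : DInv (m' + k) P.1 := padStateF_inv _ hD k h'
      have hlenL : (L.length < k) = False := by simp [hL2]
      have htt : (σ x).chooseAt h % (k+1) = t' := by
        by_cases hxi : x = i
        · subst hxi
          have harm : encM (n := n) s (BCTree.choose x children) ψ.f D h L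
              = Sum.inr (s.chooseAt h) := by
            have hdk : L.drop k = [] := by rw [← hL2]; exact List.drop_length
            simp only [encM, hlenL, if_false, hdk]
          have e0 := (hENC L).2
          rw [harm] at e0
          simp only [getChoose] at e0
          rw [ht'def, hP, hL1, e0, hσi]
        · have e1 := (hADV x hxi h le_rfl).2
          simp [wk, getChoose] at e1
          rw [e1, ht'def, hP]
          exact Nat.mod_eq_of_lt (Nat.mod_lt _ (Nat.succ_pos _))
      have hfin : (⟨(σ x).chooseAt h % (k+1), Nat.mod_lt _ (Nat.succ_pos k)⟩ : Fin (k+1))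
          = ⟨t', ht'k⟩ := Fin.ext htt
      rw [hfin, htt]
      rw [← pci_psiCh ψ D k P.1 (padStateF_fst_zero _ k D h') (padStateF_fst_high _ k D h')
        t' (by omega) w]
      refine ih ⟨t', ht'k⟩ (psiCh ψ k) (insN P.1 t' w)
        (insN_inv hPinv (by omega) le_clampv (clampv_le (hPinv.mono _ _ (by omega) (by omega))))
        (h ++ [Sum.inr t']) ((P.2 ++ [Sum.inr t']) ++ [Sum.inl w]) σ σ' hσi ?_ ?_
      · intro g'
        have e2 := hENC (L ++ (Sum.inr t' :: Sum.inl w :: g'))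
        have hdk : (L ++ (Sum.inr t' :: Sum.inl w :: g')).drop k
            = Sum.inr t' :: Sum.inl w :: g' := by
          rw [← hL2]; exact List.drop_left
        have hlen2 : ((L ++ (Sum.inr t' :: Sum.inl w :: g')).length < k) = False := by
          simp [hL2]
        have hencp : encPad k D (L ++ (Sum.inr t' :: Sum.inl w :: g')) = P.1 := by
          refine encPad_eq ((σ' x).cutAt) k D h' _ ?_
          intro c hc
          rw [List.getElem?_append_left (by omega)]
          exact hL3 c hc
        have harm2 : encM (n := n) s (BCTree.choose x children) ψ.f D h
              (L ++ (Sum.inr t' :: Sum.inl w :: g'))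
            = encM s (children ⟨t', ht'k⟩) (psiChF ψ.f k) (insN P.1 t' w)
              (h ++ [Sum.inr t']) g' := by
          simp only [encM, hdk, hlen2, if_false, hencp, Nat.mod_eq_of_lt ht'k]
        rw [harm2] at e2
        have hha : h' ++ (L ++ (Sum.inr t' :: Sum.inl w :: g'))
            = ((P.2 ++ [Sum.inr t']) ++ [Sum.inl w]) ++ g' := by
          rw [hP, hL1]; simp
        rw [hha] at e2
        exact e2
      · intro j' hj' g hg
        have hgne : g ≠ h := ne_of_len (by simpa using hg)
        have e3 := hADV j' hj' g (by simp at hg; omega)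
        simpa only [wk, if_neg hgne] using! e3

end
noncomputable section
open Classical

private def D0 : ℕ → ℝ := fun z => if z = 0 then 0 else 1

private lemma toFin_D0 : toFin (N := 2) D0 = initPts := by
  funext t
  fin_cases t <;> simp [toFin, D0, initPts]

private lemma D0_inv : DInv 0 D0 where
  mono := by
    intro x y hxy hy
    simp only [D0]
    split_ifs <;> first | omega | norm_num
  lo := by simp [D0]
  hi := by norm_num [D0]

private def encStrat {n : ℕ} (s : BCStrategy) (B : BCTree n 0) : BCStrategy where
  cutAt := fun h' => getCut (encM s B psiId.f D0 [] h')
  chooseAt := fun h' => getChoose (encM s B psiId.f D0 [] h')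

private def wkStrat {n : ℕ} (σ' : Fin n → BCStrategy) (B : BCTree n 0) : BCStrategy where
  cutAt := fun g => getCut (wk σ' B psiId.f D0 [] [] g)
  chooseAt := fun g => getChoose (wk σ' B psiId.f D0 [] [] g)

private lemma guar_mp {n : ℕ} (B : BCTree n 0) (i : Fin n) (S : Finset (Fin n))
    (M : Fin n → ℝ) (V : CakeValuation) :
    Guarantees B.toGame i S M V → Guarantees (convT B psiId).toGame i S M V := by
  rintro ⟨s, hs⟩
  refine ⟨encStrat s B, ?_⟩
  intro σ' hσ'i j hjS
  set σ : Fin n → BCStrategy := fun j' => if j' = i then s else wkStrat σ' B with hσ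
  have hσi : σ i = s := by rw [hσ]; simp; rfl
  have hplay : ∀ b, pieceValue V (B.toGame.play σ b)
      = pieceValue V ((convT B psiId).toGame.play σ' b) := by
    intro b
    show pieceValue V (allocOf (B.playAlloc initPts [] σ) b)
      = pieceValue V (allocOf ((convT B psiId).playAlloc initPts [] σ') b)
    rw [pieceValue_allocOf, pieceValue_allocOf, ← toFin_D0]
    refine master1 V b i s B psiId D0 D0_inv [] [] σ σ' hσi ?_ ?_
    · intro g'
      rw [hσ'i]
      constructor <;> simp [encStrat]
    · intro j' hj' g _
      have e1 : σ j' = wkStrat σ' B := by rw [hσ]; simp [hj']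
      rw [e1]
      exact ⟨rfl, rfl⟩
  have henvy : envy V ((convT B psiId).toGame.play σ') i j = envy V (B.toGame.play σ) i j := by
    unfold envy
    rw [hplay, hplay]
  rw [henvy]
  exact hs σ hσi j hjS

end
noncomputable section
open Classical

/-- Oracle for padding-cut values in the canonical transformed run: agent `i`
follows `s'`, other agents cut at `0`. -/
private def padOracle {n : ℕ} (x i : Fin n) (s' : BCStrategy) : Hist → ℝ :=
  fun hh => if x = i then s'.cutAt hh else 0

/-- Agent `i`'s strategy in the original game decoded from a strategy `s'` of the
transformed game, driven by the remaining suffix of the original history. -/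
private def decM {n : ℕ} (s' : BCStrategy) (i : Fin n) :
    {m : ℕ} → BCTree n m → (ℕ → ℕ) → (ℕ → ℝ) → Hist → Hist → (ℝ ⊕ ℕ)
  | _, .leaf _, _, _, _, _ => Sum.inl 0
  | _, .cut b j child, fN, D, h', g =>
      match g with
      | [] =>
          Sum.inl (clampv
            (D (fN j.val + s'.chooseAt h' % (fN (j.val+1) - fN j.val - 1 + 1)))
            (D (fN j.val + s'.chooseAt h' % (fN (j.val+1) - fN j.val - 1 + 1) + 1))
            (s'.cutAt (h' ++ [Sum.inr (s'.chooseAt h' % (fN (j.val+1) - fN j.val - 1 + 1))])))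
      | Sum.inl y :: rest =>
          let r := if b = i then s'.chooseAt h' % (fN (j.val+1) - fN j.val - 1 + 1)
                   else subIdx D (fN j.val) (fN (j.val+1) - fN j.val) y
          decM s' i child (psiCutF fN j.val r) (insN D (fN j.val + r) y)
            ((h' ++ [Sum.inr r]) ++ [Sum.inl y]) rest
      | _ => Sum.inl 0
  | _, @BCTree.choose _ _ x k children, fN, D, h', g =>
      let P := padStateF (padOracle x i s') k D h'
      match g with
      | [] => Sum.inr (s'.chooseAt P.2)
      | Sum.inr t :: rest =>
          let w := clampv (P.1 (t % (k+1))) (P.1 (t % (k+1) + 1))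
            (padOracle x i s' (P.2 ++ [Sum.inr (t % (k+1))]))
          decM s' i (children ⟨t % (k+1), Nat.mod_lt _ (Nat.succ_pos k)⟩) (psiChF fN k)
            (insN P.1 (t % (k+1)) w) ((P.2 ++ [Sum.inr (t % (k+1))]) ++ [Sum.inl w]) rest
      | _ => Sum.inl 0

/-- The canonical strategies of the adversaries in the transformed game, replaying
a profile `σ` of the original game. -/
private def w2 {n : ℕ} (σ : Fin n → BCStrategy) (s' : BCStrategy) (i : Fin n) :
    {m : ℕ} → BCTree n m → (ℕ → ℕ) → (ℕ → ℝ) → Hist → Hist → Hist → (ℝ ⊕ ℕ)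
  | _, .leaf _, _, _, _, _, _ => Sum.inl 0
  | _, .cut b j child, fN, D, h, h', g' =>
      let r := if b = i then s'.chooseAt h' % (fN (j.val+1) - fN j.val - 1 + 1)
               else subIdx D (fN j.val) (fN (j.val+1) - fN j.val)
                 (clampv (D (fN j.val)) (D (fN (j.val+1))) ((σ b).cutAt h))
      let y := if b = i then
          clampv (D (fN j.val + r)) (D (fN j.val + r + 1)) (s'.cutAt (h' ++ [Sum.inr r]))
        else clampv (D (fN j.val)) (D (fN (j.val+1))) ((σ b).cutAt h)
      if g' = h' then Sum.inr r
      else if g' = h' ++ [Sum.inr r] then Sum.inl y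
      else w2 σ s' i child (psiCutF fN j.val r) (insN D (fN j.val + r) y)
        (h ++ [Sum.inl y]) ((h' ++ [Sum.inr r]) ++ [Sum.inl y]) g'
  | _, @BCTree.choose _ _ x k children, fN, D, h, h', g' =>
      let P := padStateF (padOracle x i s') k D h'
      let t := (if x = i then s'.chooseAt P.2 else (σ x).chooseAt h) % (k+1)
      let w := clampv (P.1 t) (P.1 (t+1)) (padOracle x i s' (P.2 ++ [Sum.inr t]))
      if ∃ c, c < k ∧ g' = (padStateF (padOracle x i s') c D h').2 then Sum.inl 0
      else if g' = P.2 then Sum.inr t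
      else if g' = P.2 ++ [Sum.inr t] then Sum.inl 0
      else w2 σ s' i (children ⟨t, Nat.mod_lt _ (Nat.succ_pos k)⟩) (psiChF fN k)
        (insN P.1 t w) (h ++ [Sum.inr t]) ((P.2 ++ [Sum.inr t]) ++ [Sum.inl w]) g'

end
noncomputable section
open Classical

private lemma master2 {n : ℕ} (V : CakeValuation) (a : Fin n) (i : Fin n) :
    ∀ {m : ℕ} (B : BCTree n m) {m' : ℕ} (ψ : PMap m m') (D : ℕ → ℝ), DInv m' D →
      ∀ (h h' : Hist) (σ σ' : Fin n → BCStrategy),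
      (∀ g, (σ i).cutAt (h ++ g) = getCut (decM (σ' i) i B ψ.f D h' g)
          ∧ (σ i).chooseAt (h ++ g) = getChoose (decM (σ' i) i B ψ.f D h' g)) →
      (∀ j, j ≠ i → ∀ g' : Hist, h'.length ≤ g'.length →
          (σ' j).cutAt g' = getCut (w2 σ (σ' i) i B ψ.f D h h' g')
        ∧ (σ' j).chooseAt g' = getChoose (w2 σ (σ' i) i B ψ.f D h h' g')) →
      valsum V a (B.playAlloc (toFin (pci ψ D)) h σ)
        = valsum V a ((convT B ψ).playAlloc (toFin D) h' σ') := by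
  intro m B
  induction B with
  | @leaf m alloc =>
      intro m' ψ D hD h h' σ σ' hDEC hADV
      simp only [convT, BCTree.playAlloc]
      rw [valsum_map, valsum_map]
      set A : ℕ → Fin n := fun z => alloc ⟨min z m, by omega⟩ with hA
      have hL : ∑ t : Fin (m+1),
          (if alloc t = a then V.v (toFin (pci ψ D) t.castSucc) (toFin (pci ψ D) t.succ) else 0)
          = ∑ x ∈ Finset.range (m+1),
            (if A x = a then V.v (D (ψ.f x)) (D (ψ.f (x+1))) else 0) := by
        rw [← Fin.sum_univ_eq_sum_range]
        refine Finset.sum_congr rfl ?_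
        intro t _
        have e1 : A t.val = alloc t := by
          have e2 : (⟨min t.val m, by omega⟩ : Fin (m+1)) = t := by
            ext; simp; omega
          rw [hA]; simp only [e2]
        rw [e1]
        rfl
      have hR : ∑ u : Fin (m'+1),
          (if alloc ⟨clps ψ u.val, Nat.lt_succ_of_le (Nat.findGreatest_le m)⟩ = a
            then V.v (toFin D u.castSucc) (toFin D u.succ) else 0)
          = ∑ u ∈ Finset.range (m'+1),
            (if A (clps ψ u) = a then V.v (D u) (D (u+1)) else 0) := by
        rw [← Fin.sum_univ_eq_sum_range]
        refine Finset.sum_congr rfl ?_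
        intro u _
        have h2 : clps ψ u.val ≤ m := Nat.findGreatest_le m
        have e1 : A (clps ψ u.val)
            = alloc ⟨clps ψ u.val, Nat.lt_succ_of_le (Nat.findGreatest_le m)⟩ := by
          have e2 : (⟨min (clps ψ u.val) m, by omega⟩ : Fin (m+1))
              = ⟨clps ψ u.val, Nat.lt_succ_of_le (Nat.findGreatest_le m)⟩ := by
            ext; simp; omega
          rw [hA]; simp only [e2]
        rw [e1]
        rfl
      rw [hL, hR, leaf_sums V a ψ hD A, ψ.zero, ψ.last, ← Finset.range_eq_Ico]
  | @cut m b j child ih =>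
      intro m' ψ D hD h h' σ σ' hDEC hADV
      have hjm : j.val + 1 ≤ m + 1 := j.isLt
      have hpq : ψ.f j.val < ψ.f (j.val+1) := ψ.mono (Nat.lt_succ_self _)
      have hqle : ψ.f (j.val+1) ≤ m' + 1 := ψ.le hjm
      have hrK' : (σ' b).chooseAt h' % (ψ.f (j.val+1) - ψ.f j.val - 1 + 1)
          < ψ.f (j.val+1) - ψ.f j.val - 1 + 1 := Nat.mod_lt _ (Nat.succ_pos _)
      simp only [convT, BCTree.playAlloc, insertPt_toFin]
      simp only [toFin, Fin.coe_castSucc, Fin.val_succ, clampv_def, pci]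
      set r : ℕ := (σ' b).chooseAt h' % (ψ.f (j.val+1) - ψ.f j.val - 1 + 1) with hrdef
      have hrK : r < ψ.f (j.val+1) - ψ.f j.val - 1 + 1 := hrK'
      set y' : ℝ := clampv (D (ψ.f j.val + r)) (D (ψ.f j.val + r + 1))
        ((σ' b).cutAt (h' ++ [Sum.inr r])) with hy'def
      by_cases hbi : b = i
      · subst hbi
        have e0 := (hDEC []).1
        simp only [List.append_nil, decM, getCut] at e0
        have hyy : clampv (D (ψ.f j.val)) (D (ψ.f (j.val+1))) ((σ b).cutAt h) = y' := by
          rw [e0, hy'def]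
          exact clamp_sub hD (by omega) hqle _
        rw [hyy]
        rw [← pci_psiCut ψ D j.val r (Nat.le_of_lt_succ j.isLt) (by omega) y']
        refine ih (psiCut ψ j.val r (Nat.le_of_lt_succ j.isLt) (by omega))
          (insN D (ψ.f j.val + r) y')
          (insN_inv hD (by omega) le_clampv (clampv_le (hD.mono _ _ (by omega) (by omega))))
          (h ++ [Sum.inl y']) ((h' ++ [Sum.inr r]) ++ [Sum.inl y']) σ σ' ?_ ?_
        · intro g
          have e2 := hDEC (Sum.inl y' :: g)
          simp only [decM, eq_self_iff_true, if_true] at e2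
          simpa only [List.append_assoc, List.cons_append, List.singleton_append,
            List.nil_append] using! e2
        · intro j' hj' g' hg
          have hne1 : g' ≠ h' := ne_of_len (by simp at hg ⊢; omega)
          have hne2 : ∀ z : ℕ, g' ≠ h' ++ [Sum.inr z] := by
            intro z
            refine ne_of_len ?_
            simp at hg ⊢
            omega
          have e3 := hADV j' hj' g' (by simp at hg; omega)
          simp only [w2, eq_self_iff_true, if_true] at e3
          simpa only [if_neg hne1, if_neg (hne2 _)] using! e3
      · -- adversary cutter
        have e1 := (hADV b hbi h' le_rfl).2
        simp only [w2, eq_self_iff_true, if_true, if_neg hbi, getChoose] at e1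
        have hsc := subIdx_clamp hD hpq hqle ((σ b).cutAt h)
        have hsle := subIdx_le D (ψ.f j.val) (ψ.f (j.val+1) - ψ.f j.val)
          (clampv (D (ψ.f j.val)) (D (ψ.f (j.val+1))) ((σ b).cutAt h))
        have hre : r = subIdx D (ψ.f j.val) (ψ.f (j.val+1) - ψ.f j.val)
            (clampv (D (ψ.f j.val)) (D (ψ.f (j.val+1))) ((σ b).cutAt h)) := by
          rw [hrdef, e1]
          exact Nat.mod_eq_of_lt (by omega)
        have e4 := (hADV b hbi (h' ++ [Sum.inr r]) (by simp)).1
        simp only [w2, if_neg hbi] at e4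
        rw [if_neg (show (h' ++ [Sum.inr r] : Hist) ≠ h' from ne_of_len (by simp))] at e4
        rw [if_pos (show (h' ++ [Sum.inr r] : Hist) = h' ++ [Sum.inr (subIdx D (ψ.f j.val)
          (ψ.f (j.val+1) - ψ.f j.val)
          (clampv (D (ψ.f j.val)) (D (ψ.f (j.val+1))) ((σ b).cutAt h)))] from by
            rw [hre])] at e4
        simp only [getCut] at e4
        have hyy : clampv (D (ψ.f j.val)) (D (ψ.f (j.val+1))) ((σ b).cutAt h) = y' := by
          rw [hy'def, e4, hre]
          exact (clampv_of_mem hsc.1 hsc.2.1).symm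
        rw [hyy]
        rw [← pci_psiCut ψ D j.val r (Nat.le_of_lt_succ j.isLt) (by omega) y']
        refine ih (psiCut ψ j.val r (Nat.le_of_lt_succ j.isLt) (by omega))
          (insN D (ψ.f j.val + r) y')
          (insN_inv hD (by omega) le_clampv (clampv_le (hD.mono _ _ (by omega) (by omega))))
          (h ++ [Sum.inl y']) ((h' ++ [Sum.inr r]) ++ [Sum.inl y']) σ σ' ?_ ?_
        · intro g
          have e2 := hDEC (Sum.inl y' :: g)
          simp only [decM, if_neg hbi] at e2
          have hsub : subIdx D (ψ.f j.val) (ψ.f (j.val+1) - ψ.f j.val) y' = r := by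
            rw [← hyy, ← hre]
          simp only [hsub] at e2
          simpa only [List.append_assoc, List.cons_append, List.singleton_append,
            List.nil_append] using! e2
        · intro j' hj' g' hg
          have hne1 : g' ≠ h' := ne_of_len (by simp at hg ⊢; omega)
          have hne2 : ∀ z : ℕ, g' ≠ h' ++ [Sum.inr z] := by
            intro z
            refine ne_of_len ?_
            simp at hg ⊢
            omega
          have e3 := hADV j' hj' g' (by simp at hg; omega)
          simp only [w2, if_neg hbi] at e3
          simp only [if_neg hne1, if_neg (hne2 _)] at e3
          simp only [← hre] at e3
          simpa only [hyy] using! e3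
  | @choose m x k children ih =>
      intro m' ψ D hD h h' σ σ' hDEC hADV
      have hPP : padStateF ((σ' x).cutAt) k D h'
          = padStateF (padOracle x i (σ' i)) k D h' := by
        refine padStateF_congr k D h' ?_
        intro c hc
        by_cases hxi : x = i
        · subst hxi
          simp [padOracle]
        · have e := (hADV x hxi ((padStateF (padOracle x i (σ' i)) c D h').2)
            (by rw [padStateF_len]; omega)).1
          have hex : ∃ c', c' < k ∧ (padStateF (padOracle x i (σ' i)) c D h').2
              = (padStateF (padOracle x i (σ' i)) c' D h').2 := ⟨c, hc, rfl⟩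
          simp only [w2, if_pos hex, getCut] at e
          rw [e, padOracle, if_neg hxi]
      simp only [convT]
      rw [padPlay, hPP]
      simp only [BCTree.playAlloc, insertPt_toFin]
      simp only [toFin, Fin.coe_castSucc, Fin.val_succ, clampv_def, pci]
      set P := padStateF (padOracle x i (σ' i)) k D h' with hP
      have hPlen : P.2.length = h'.length + k := by rw [hP]; exact padStateF_len _ k D h'
      have hPinv : DInv (m' + k) P.1 := by rw [hP]; exact padStateF_inv _ hD k h'
      have hnopad : ∀ g' : Hist, h'.length + k ≤ g'.length →
          ¬ ∃ c, c < k ∧ g' = (padStateF (padOracle x i (σ' i)) c D h').2 := by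
        rintro g' hg' ⟨c, hc, e⟩
        rw [e, padStateF_len] at hg'
        omega
      by_cases hxi : x = i
      · subst hxi
        set t' : ℕ := (σ' x).chooseAt P.2 % (k+1) with ht'def
        have ht'k : t' < k + 1 := by rw [ht'def]; exact Nat.mod_lt _ (Nat.succ_pos _)
        have e0 := (hDEC []).2
        simp only [List.append_nil, decM, getChoose] at e0
        simp only [← hP] at e0
        have htt : (σ x).chooseAt h % (k+1) = t' := by rw [e0, ht'def]
        have hfin : (⟨(σ x).chooseAt h % (k+1), Nat.mod_lt _ (Nat.succ_pos k)⟩ : Fin (k+1))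
            = ⟨t', ht'k⟩ := Fin.ext htt
        rw [hfin, htt]
        set w : ℝ := clampv (P.1 t') (P.1 (t'+1))
          (padOracle x x (σ' x) (P.2 ++ [Sum.inr t'])) with hwdef
        have hworacle : clampv (P.1 t') (P.1 (t'+1)) ((σ' x).cutAt (P.2 ++ [Sum.inr t']))
            = w := by
          rw [hwdef, padOracle, if_pos rfl]
        rw [hworacle]
        rw [← pci_psiCh ψ D k P.1
          (by rw [hP]; exact padStateF_fst_zero _ k D h')
          (by rw [hP]; exact padStateF_fst_high _ k D h') t' (by omega) w]
        refine ih ⟨t', ht'k⟩ (psiCh ψ k) (insN P.1 t' w)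
          (insN_inv hPinv (by omega) le_clampv
            (clampv_le (hPinv.mono _ _ (by omega) (by omega))))
          (h ++ [Sum.inr t']) ((P.2 ++ [Sum.inr t']) ++ [Sum.inl w]) σ σ' ?_ ?_
        · intro g
          have e2 := hDEC (Sum.inr t' :: g)
          simp only [decM, Nat.mod_eq_of_lt ht'k] at e2
          simp only [← hP] at e2
          simpa only [List.append_assoc, List.cons_append, List.singleton_append,
            List.nil_append] using! e2
        · intro j' hj' g' hg
          have hlg : h'.length + k + 2 ≤ g'.length := by
            simp at hg
            omega
          have hne2 : g' ≠ P.2 := ne_of_len (by omega)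
          have hne3 : ∀ u : ℝ ⊕ ℕ, g' ≠ P.2 ++ [u] := by
            intro u
            refine ne_of_len ?_
            simp [hPlen]
            omega
          have e3 := hADV j' hj' g' (by omega)
          simp only [w2, eq_self_iff_true, if_true] at e3
          simp only [← hP] at e3
          simp only [if_neg (hnopad g' (by omega)), if_neg hne2, if_neg (hne3 _)] at e3
          simpa only [Nat.mod_eq_of_lt ht'k] using! e3
      · -- adversary chooser
        have eC := (hADV x hxi P.2 (by omega)).2
        simp only [w2] at eC
        simp only [← hP] at eC
        simp only [if_neg (hnopad P.2 (by omega)), eq_self_iff_true, if_true,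
          if_neg hxi, getChoose] at eC
        set tF : ℕ := (σ x).chooseAt h % (k+1) with htF
        have htFk : tF < k + 1 := by rw [htF]; exact Nat.mod_lt _ (Nat.succ_pos _)
        have htt : (σ' x).chooseAt P.2 % (k+1) = tF := by
          rw [eC, htF]
          exact Nat.mod_eq_of_lt (Nat.mod_lt _ (Nat.succ_pos _))
        have hfin : (⟨(σ' x).chooseAt P.2 % (k+1), Nat.mod_lt _ (Nat.succ_pos k)⟩ : Fin (k+1))
            = ⟨tF, htFk⟩ := Fin.ext htt
        rw [hfin, htt]
        have eW := (hADV x hxi (P.2 ++ [Sum.inr tF])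
          (by simp only [List.length_append, List.length_cons, List.length_nil, hPlen]
              omega)).1
        simp only [w2] at eW
        simp only [← hP] at eW
        rw [if_neg (hnopad _ (by simp only [List.length_append, List.length_cons,
            List.length_nil, hPlen]; omega)),
          if_neg (show (P.2 ++ [Sum.inr tF] : Hist) ≠ P.2 from ne_of_len (by simp)),
          if_pos (show (P.2 ++ [Sum.inr tF] : Hist)
            = P.2 ++ [Sum.inr ((if x = i then (σ' i).chooseAt P.2
                else (σ x).chooseAt h) % (k+1))] from by
              rw [if_neg hxi, ← htF])] at eW
        simp only [getCut] at eW
        set w : ℝ := clampv (P.1 tF) (P.1 (tF+1))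
          (padOracle x i (σ' i) (P.2 ++ [Sum.inr tF])) with hwdef
        have hworacle : clampv (P.1 tF) (P.1 (tF+1)) ((σ' x).cutAt (P.2 ++ [Sum.inr tF]))
            = w := by
          rw [hwdef, eW, padOracle, if_neg hxi]
        rw [hworacle]
        rw [← pci_psiCh ψ D k P.1
          (by rw [hP]; exact padStateF_fst_zero _ k D h')
          (by rw [hP]; exact padStateF_fst_high _ k D h') tF (by omega) w]
        refine ih ⟨tF, htFk⟩ (psiCh ψ k) (insN P.1 tF w)
          (insN_inv hPinv (by omega) le_clampv
            (clampv_le (hPinv.mono _ _ (by omega) (by omega))))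
          (h ++ [Sum.inr tF]) ((P.2 ++ [Sum.inr tF]) ++ [Sum.inl w]) σ σ' ?_ ?_
        · intro g
          have e2 := hDEC (Sum.inr tF :: g)
          simp only [decM, Nat.mod_eq_of_lt htFk] at e2
          simp only [← hP] at e2
          simpa only [List.append_assoc, List.cons_append, List.singleton_append,
            List.nil_append] using! e2
        · intro j' hj' g' hg
          have hlg : h'.length + k + 2 ≤ g'.length := by
            simp at hg
            omega
          have hne2 : g' ≠ P.2 := ne_of_len (by omega)
          have hne3 : ∀ u : ℝ ⊕ ℕ, g' ≠ P.2 ++ [u] := by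
            intro u
            refine ne_of_len ?_
            simp [hPlen]
            omega
          have e3 := hADV j' hj' g' (by omega)
          simp only [w2] at e3
          simp only [← hP] at e3
          simp only [if_neg (hnopad g' (by omega)), if_neg hne2, if_neg (hne3 _),
            if_neg hxi] at e3
          simpa only [← htF] using! e3

end
noncomputable section
open Classical

private def decStrat {n : ℕ} (s' : BCStrategy) (i : Fin n) (B : BCTree n 0) : BCStrategy where
  cutAt := fun g => getCut (decM s' i B psiId.f D0 [] g)
  chooseAt := fun g => getChoose (decM s' i B psiId.f D0 [] g)

private def w2Strat {n : ℕ} (σ : Fin n → BCStrategy) (s' : BCStrategy) (i : Fin n)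
    (B : BCTree n 0) : BCStrategy where
  cutAt := fun g' => getCut (w2 σ s' i B psiId.f D0 [] [] g')
  chooseAt := fun g' => getChoose (w2 σ s' i B psiId.f D0 [] [] g')

private lemma guar_mpr {n : ℕ} (B : BCTree n 0) (i : Fin n) (S : Finset (Fin n))
    (M : Fin n → ℝ) (V : CakeValuation) :
    Guarantees (convT B psiId).toGame i S M V → Guarantees B.toGame i S M V := by
  rintro ⟨s', hs⟩
  refine ⟨decStrat s' i B, ?_⟩
  intro σ hσi j hjS
  set σ' : Fin n → BCStrategy := fun j' => if j' = i then s' else w2Strat σ s' i B with hσ'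
  have hσ'i : σ' i = s' := by rw [hσ']; simp; rfl
  have hplay : ∀ b, pieceValue V (B.toGame.play σ b)
      = pieceValue V ((convT B psiId).toGame.play σ' b) := by
    intro b
    show pieceValue V (allocOf (B.playAlloc initPts [] σ) b)
      = pieceValue V (allocOf ((convT B psiId).playAlloc initPts [] σ') b)
    rw [pieceValue_allocOf, pieceValue_allocOf, ← toFin_D0]
    refine master2 V b i B psiId D0 D0_inv [] [] σ σ' ?_ ?_
    · intro g
      rw [hσi, hσ'i]
      exact ⟨rfl, rfl⟩
    · intro j' hj' g' _
      have e1 : σ' j' = w2Strat σ s' i B := by rw [hσ']; simp [hj']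
      rw [e1, hσ'i]
      exact ⟨rfl, rfl⟩
  have henvy : envy V (B.toGame.play σ) i j = envy V ((convT B psiId).toGame.play σ') i j := by
    unfold envy
    rw [hplay, hplay]
  rw [henvy]
  exact hs σ' hσ'i j hjS

end
/-- **Theorem.** Any BC protocol can be converted into a strongly envy-equivalent BC
protocol in which every choose node either has no cut node descendants, or has only
cut node children, all controlled by the same agent as the choose node and
corresponding to cuts into a sequence of consecutive contiguous pieces. -/
theorem bc_intermediate_form {n : ℕ} (B : BCTree n 0) :
    ∃ B' : BCTree n 0, B'.intermediateForm ∧ StronglyEnvyEquiv B.toGame B'.toGame := by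
  refine ⟨convT B psiId, convT_iform B psiId, ?_⟩
  intro i S _ M _ V
  exact ⟨fun hg => guar_mp B i S M V hg, fun hg => guar_mpr B i S M V hg⟩
end

section
/- For every branch choice (BC) protocol there exists a generalised cut and choose (GCC) protocol that is strongly envy-equivalent to it. -/
/-! ## Extended BC protocols -/

/-- An extended BC protocol tree over `n` agents, indexed by the number of cuts made
so far.  Cut points are referred to by their index of creation (index `0` is the point
`0`, index `1` is the point `1`, and index `t+2` is the `t`-th cut made).  At a `cut`
node the designated agent makes one cut anywhere between the two existing (possibly
non-consecutive) cut points `a` and `b`; at a `choose` node the designated agent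
selects which child the execution proceeds to; a `leaf` allocates, for each listed
pair of existing cut points, the whole piece of cake lying between them to the listed
agent. -/
inductive ExtTree (n : ℕ) : ℕ → Type
  | leaf {m : ℕ} (alloc : List (Fin (m + 2) × Fin (m + 2) × Fin n)) : ExtTree n m
  | cut {m : ℕ} (agent : Fin n) (a b : Fin (m + 2)) (child : ExtTree n (m + 1)) : ExtTree n m
  | choose {m : ℕ} (agent : Fin n) {k : ℕ} (children : Fin (k + 1) → ExtTree n m) : ExtTree n m

/-- Record a newly created cut point `y`. -/
def extendPt {m : ℕ} (p : Fin (m + 2) → ℝ) (y : ℝ) : Fin (m + 3) → ℝ :=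
  fun t => if h : (t : ℕ) < m + 2 then p ⟨t, h⟩ else y

/-- Playing an extended BC protocol: given the cut points made so far (indexed by
creation order), the execution history and a strategy profile, compute the final list
of (interval, agent) pairs. -/
def ExtTree.playAlloc {n : ℕ} : {m : ℕ} → ExtTree n m → (Fin (m + 2) → ℝ) → Hist →
    (Fin n → BCStrategy) → List (ℝ × ℝ × Fin n)
  | _, .leaf alloc, p, _, _ => alloc.map fun q => (p q.1, p q.2.1, q.2.2)
  | _, .cut i a b child, p, h, σ =>
      let lo := min (p a) (p b)
      let hi := max (p a) (p b)
      let y := max lo (min ((σ i).cutAt h) hi)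
      child.playAlloc (extendPt p y) (h ++ [Sum.inl y]) σ
  | _, @ExtTree.choose _ _ i k children, p, h, σ =>
      let t : Fin (k + 1) := ⟨(σ i).chooseAt h % (k + 1), Nat.mod_lt _ (Nat.succ_pos k)⟩
      (children t).playAlloc p (h ++ [Sum.inr (t : ℕ)]) σ

/-- A list of (interval, agent) pairs partitions the cake `[0,1]`: it can be reordered
into a sequence of intervals with nonnegative lengths, chained end to end from `0`
to `1`.  In particular, for each listed piece the left endpoint is at most the right
endpoint. -/
def PartitionsCake {n : ℕ} (L : List (ℝ × ℝ × Fin n)) : Prop :=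
  ∃ L' : List (ℝ × ℝ × Fin n), L'.Perm L ∧
    (∀ q ∈ L', q.1 ≤ q.2.1) ∧
    List.Chain' (fun q r => q.2.1 = r.1) L' ∧
    (L'.head?.map fun q => q.1) = some 0 ∧
    (L'.getLast?.map fun q => q.2.1) = some 1

/-- An extended BC protocol: an extended BC tree which is well formed, i.e. whatever
the agents do, at the leaf reached, each allocated piece lies between cut points
`x ≤ y` and the allocated pieces partition the entire cake. -/
structure ExtProtocol (n : ℕ) where
  tree : ExtTree n 0
  valid : ∀ σ : Fin n → BCStrategy, PartitionsCake (tree.playAlloc initPts [] σ)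

/-- The extensive-form game determined by an extended BC protocol. -/
def ExtProtocol.toGame {n : ℕ} (E : ExtProtocol n) : GameForm n where
  Strategy := fun _ => BCStrategy
  play := fun σ => allocOf (E.tree.playAlloc initPts [] σ)

/-- The number of nodes of an extended BC tree. -/
def ExtTree.size {n : ℕ} : {m : ℕ} → ExtTree n m → ℕ
  | _, .leaf _ => 1
  | _, .cut _ _ _ child => child.size + 1
  | _, @ExtTree.choose _ _ _ k children => (∑ t : Fin (k + 1), (children t).size) + 1

/-- An extended BC tree contains a cut node. -/
def ExtTree.hasCut {n : ℕ} : {m : ℕ} → ExtTree n m → Prop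
  | _, .leaf _ => False
  | _, .cut _ _ _ _ => True
  | _, @ExtTree.choose _ _ _ _ children => ∃ t, (children t).hasCut

/-- No choose node of the tree has a cut node among its descendants. -/
def ExtTree.cutsBeforeChoices {n : ℕ} : {m : ℕ} → ExtTree n m → Prop
  | _, .leaf _ => True
  | _, .cut _ _ _ child => child.cutsBeforeChoices
  | _, @ExtTree.choose _ _ _ _ children => ∀ t, ¬ (children t).hasCut

/-! ## Generalised cut and choose (GCC) protocols -/

/-- A generalised cut and choose (GCC) protocol tree over `n` agents, indexed by the
number of cuts made so far.  Cut points are referred to by their index of creation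
(index `0` is the point `0`, index `1` is the point `1`, and index `t+2` is the `t`-th
cut made).  At a `cut` node, the designated agent is given the set `S` of intervals
whose endpoints are existing cut points, picks one of them and makes a cut inside it;
at a `choose` node, the designated agent is given such a set `S`, picks one interval
of it and is allocated that interval; an `ifElse` node branches according to the
ordering of the previously made cut points and the execution history (the condition
is required to depend only on the relative order of the cut points, not on their
exact positions). -/
inductive GCCTree (n : ℕ) : ℕ → Type
  | leaf {m : ℕ} : GCCTree n m
  | cut {m : ℕ} (agent : Fin n) {k : ℕ} (S : Fin (k + 1) → Fin (m + 2) × Fin (m + 2))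
      (child : GCCTree n (m + 1)) : GCCTree n m
  | choose {m : ℕ} (agent : Fin n) {k : ℕ} (S : Fin (k + 1) → Fin (m + 2) × Fin (m + 2))
      (child : GCCTree n m) : GCCTree n m
  | ifElse {m : ℕ} {k : ℕ} (cond : (Fin (m + 2) → ℝ) → List ℕ → Fin (k + 1))
      (hcond : ∀ p q d, (∀ a b, p a ≤ p b ↔ q a ≤ q b) → cond p d = cond q d)
      (children : Fin (k + 1) → GCCTree n m) : GCCTree n m

/-- Playing a GCC protocol: given the cut points made so far (indexed by creation
order), the execution history, a strategy profile and the pieces allocated so far,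
compute the final list of (interval, agent) pairs. -/
def GCCTree.play {n : ℕ} : {m : ℕ} → GCCTree n m → (Fin (m + 2) → ℝ) → Hist →
    (Fin n → BCStrategy) → List (ℝ × ℝ × Fin n) → List (ℝ × ℝ × Fin n)
  | _, .leaf, _, _, _, acc => acc
  | _, @GCCTree.cut _ _ i k S child, p, h, σ, acc =>
      let idx : Fin (k + 1) := ⟨(σ i).chooseAt h % (k + 1), Nat.mod_lt _ (Nat.succ_pos k)⟩
      let lo := min (p (S idx).1) (p (S idx).2)
      let hi := max (p (S idx).1) (p (S idx).2)
      let y := max lo (min ((σ i).cutAt h) hi)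
      child.play (extendPt p y) (h ++ [Sum.inr (idx : ℕ), Sum.inl y]) σ acc
  | _, @GCCTree.choose _ _ i k S child, p, h, σ, acc =>
      let idx : Fin (k + 1) := ⟨(σ i).chooseAt h % (k + 1), Nat.mod_lt _ (Nat.succ_pos k)⟩
      child.play p (h ++ [Sum.inr (idx : ℕ)]) σ (acc ++ [(p (S idx).1, p (S idx).2, i)])
  | _, @GCCTree.ifElse _ _ k cond _ children, p, h, σ, acc =>
      (children (cond p (h.filterMap Sum.getRight?))).play p h σ acc

/-- The extensive-form game determined by a GCC protocol. -/
def GCCTree.toGame {n : ℕ} (t : GCCTree n 0) : GameForm n where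
  Strategy := fun _ => BCStrategy
  play := fun σ => allocOf (t.play initPts [] σ [])

/-- The number of nodes of a GCC tree. -/
def GCCTree.size {n : ℕ} : {m : ℕ} → GCCTree n m → ℕ
  | _, .leaf => 1
  | _, .cut _ _ child => child.size + 1
  | _, .choose _ _ child => child.size + 1
  | _, @GCCTree.ifElse _ _ k _ _ children => (∑ t : Fin (k + 1), (children t).size) + 1

/-! ## Auxiliary material for the proof -/

section Aux

/-- Translate a BC execution history into the corresponding GCC history:
each cut gets a `Sum.inr 0` marker (the choice of the singleton interval set)
inserted before it. -/
def uHist : Hist → Hist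
  | [] => []
  | Sum.inl y :: h => Sum.inr 0 :: Sum.inl y :: uHist h
  | Sum.inr t :: h => Sum.inr t :: uHist h

theorem uHist_append (h₁ h₂ : Hist) : uHist (h₁ ++ h₂) = uHist h₁ ++ uHist h₂ := by
  induction h₁ with
  | nil => rfl
  | cons e h ih => cases e <;> simp [uHist, ih]

theorem uHist_head (h : Hist) : uHist h = [] ∨ ∃ u r, uHist h = Sum.inr u :: r := by
  cases h with
  | nil => exact Or.inl rfl
  | cons e t => cases e with
    | inl y => exact Or.inr ⟨0, _, rfl⟩
    | inr u => exact Or.inr ⟨u, _, rfl⟩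

theorem uHist_injective : Function.Injective uHist := by
  intro h₁
  induction h₁ with
  | nil =>
    intro h₂ he
    cases h₂ with
    | nil => rfl
    | cons e t => cases e <;> simp [uHist] at he
  | cons e t ih =>
    intro h₂ he
    cases h₂ with
    | nil => cases e <;> simp [uHist] at he
    | cons e' t' =>
      cases e with
      | inl y =>
        cases e' with
        | inl y' =>
          simp only [uHist, List.cons.injEq] at he
          obtain ⟨-, h1, h2⟩ := he
          rw [Sum.inl.injEq] at h1
          rw [h1, ih h2]
        | inr u =>
          simp only [uHist, List.cons.injEq] at he
          rcases uHist_head t' with h0 | ⟨u', r', h0⟩ <;> rw [h0] at he <;> simp at he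
      | inr u =>
        cases e' with
        | inl y' =>
          simp only [uHist, List.cons.injEq] at he
          rcases uHist_head t with h0 | ⟨u', r', h0⟩ <;> rw [h0] at he <;> simp at he
        | inr u' =>
          simp only [uHist, List.cons.injEq, Sum.inr.injEq] at he
          rw [he.1, ih he.2]

/-- Translate a strategy for the GCC simulation back to a BC strategy. -/
def shrinkStrat (s : BCStrategy) : BCStrategy :=
  ⟨fun h => s.cutAt (uHist h), fun h => s.chooseAt (uHist h)⟩

/-- Translate a BC strategy to a strategy for the GCC simulation. -/
noncomputable def expandStrat (s : BCStrategy) : BCStrategy :=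
  ⟨fun h => s.cutAt (Function.invFun uHist h), fun h => s.chooseAt (Function.invFun uHist h)⟩

theorem shrink_expand (s : BCStrategy) : shrinkStrat (expandStrat s) = s := by
  have hl : ∀ h, Function.invFun uHist (uHist h) = h :=
    Function.leftInverse_invFun uHist_injective
  cases s with
  | mk c ch => simp [shrinkStrat, expandStrat, hl]

end Aux

section Rank

/-- The rank of index `a` among the values of `p` (zero-based), determined only by
the comparison matrix of `p`. -/
noncomputable def rankF {N : ℕ} (p : Fin N → ℝ) : Fin N → Fin N := fun a =>
  ⟨(Finset.univ.filter fun b => p b ≤ p a).card - 1, by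
    have h1 : a ∈ Finset.univ.filter fun b => p b ≤ p a := by simp
    have h2 : 0 < (Finset.univ.filter fun b => p b ≤ p a).card := Finset.card_pos.2 ⟨a, h1⟩
    have h3 : (Finset.univ.filter fun b => p b ≤ p a).card ≤ N := by
      simpa using Finset.card_filter_le Finset.univ fun b => p b ≤ p a
    have : 0 < N := lt_of_lt_of_le h2 h3
    omega⟩

theorem rankF_le_iff {N : ℕ} (p : Fin N → ℝ) (a b : Fin N) :
    rankF p a ≤ rankF p b ↔ p a ≤ p b := by
  have hcA : 0 < (Finset.univ.filter fun x => p x ≤ p a).card :=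
    Finset.card_pos.2 ⟨a, by simp⟩
  have hcB : 0 < (Finset.univ.filter fun x => p x ≤ p b).card :=
    Finset.card_pos.2 ⟨b, by simp⟩
  simp only [rankF, Fin.le_def]
  constructor
  · intro h
    by_contra hab
    push_neg at hab
    have hsub : (Finset.univ.filter fun x => p x ≤ p b) ⊂
        (Finset.univ.filter fun x => p x ≤ p a) := by
      constructor
      · intro x hx
        simp only [Finset.mem_filter, Finset.mem_univ, true_and] at hx ⊢
        linarith
      · intro hAB
        have := hAB (show a ∈ _ by simp)
        simp only [Finset.mem_filter, Finset.mem_univ, true_and] at this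
        linarith
    have := Finset.card_lt_card hsub
    omega
  · intro h
    have hsub : (Finset.univ.filter fun x => p x ≤ p a) ⊆
        (Finset.univ.filter fun x => p x ≤ p b) := by
      intro x hx
      simp only [Finset.mem_filter, Finset.mem_univ, true_and] at hx ⊢
      linarith
    have := Finset.card_le_card hsub
    omega

theorem rankF_congr {N : ℕ} (p q : Fin N → ℝ) (h : ∀ a b, p a ≤ p b ↔ q a ≤ q b) :
    rankF p = rankF q := by
  funext a
  have : (Finset.univ.filter fun b => p b ≤ p a) =
      (Finset.univ.filter fun b => q b ≤ q a) :=
    Finset.filter_congr fun b _ => by simpa using h b a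
  simp only [rankF, this]

/-- Sorting `p` via the rank function yields a monotone tuple. -/
theorem monotone_comp_sort_rankF {N : ℕ} (p : Fin N → ℝ) :
    Monotone (p ∘ Tuple.sort (rankF p)) := by
  intro i j hij
  have := Tuple.monotone_sort (rankF p) hij
  exact (rankF_le_iff p _ _).1 this

end Rank

section SimDef

/-- An `ifElse` node branching on the rank function of the current cut points. -/
noncomputable def branchNode {n m : ℕ}
    (body : (Fin (m + 2) → Fin (m + 2)) → GCCTree n m) : GCCTree n m :=
  GCCTree.ifElse
    (k := Fintype.card (Fin (m + 2) → Fin (m + 2)) - 1)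
    (cond := fun p _ =>
      Fin.cast (Nat.succ_pred_eq_of_pos Fintype.card_pos).symm
        (Fintype.equivFin (Fin (m + 2) → Fin (m + 2)) (rankF p)))
    (hcond := by
      intro p q d h
      simp only [rankF_congr p q h])
    (children := fun idx =>
      body ((Fintype.equivFin (Fin (m + 2) → Fin (m + 2))).symm
        (Fin.cast (Nat.succ_pred_eq_of_pos Fintype.card_pos) idx)))

theorem branchNode_play {n m : ℕ} (body : (Fin (m + 2) → Fin (m + 2)) → GCCTree n m)
    (p : Fin (m + 2) → ℝ) (h : Hist) (σ : Fin n → BCStrategy) (acc : List (ℝ × ℝ × Fin n)) :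
    (branchNode body).play p h σ acc = (body (rankF p)).play p h σ acc := by
  have hd : ∀ x, (Fintype.equivFin (Fin (m + 2) → Fin (m + 2))).symm
      (Fin.cast (Nat.succ_pred_eq_of_pos Fintype.card_pos)
        (Fin.cast (Nat.succ_pred_eq_of_pos Fintype.card_pos).symm
          (Fintype.equivFin (Fin (m + 2) → Fin (m + 2)) x))) = x := by
    intro x
    have : (Fin.cast (Nat.succ_pred_eq_of_pos Fintype.card_pos)
        (Fin.cast (Nat.succ_pred_eq_of_pos Fintype.card_pos).symm
          (Fintype.equivFin (Fin (m + 2) → Fin (m + 2)) x))) =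
        Fintype.equivFin (Fin (m + 2) → Fin (m + 2)) x := by
      apply Fin.ext; simp
    rw [this, Equiv.symm_apply_apply]
  simp only [branchNode, GCCTree.play, hd]

/-- A chain of singleton choose nodes allocating the sorted pieces at a leaf. -/
def allocChain {n m : ℕ} (alloc : Fin (m + 1) → Fin n) (π : Equiv.Perm (Fin (m + 2))) :
    List (Fin (m + 1)) → GCCTree n m
  | [] => .leaf
  | t :: ts => .choose (alloc t) (fun _ : Fin 1 => (π t.castSucc, π t.succ))
      (allocChain alloc π ts)

theorem allocChain_play {n m : ℕ} (alloc : Fin (m + 1) → Fin n)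
    (π : Equiv.Perm (Fin (m + 2))) (L : List (Fin (m + 1))) (p : Fin (m + 2) → ℝ)
    (h : Hist) (σ : Fin n → BCStrategy) (acc : List (ℝ × ℝ × Fin n)) :
    (allocChain alloc π L).play p h σ acc =
      acc ++ L.map fun t => (p (π t.castSucc), p (π t.succ), alloc t) := by
  induction L generalizing h acc with
  | nil => simp [allocChain, GCCTree.play]
  | cons t ts ih => simp [allocChain, GCCTree.play, ih]

/-- The GCC simulation of a BC tree. -/
noncomputable def simTree {n : ℕ} : {m : ℕ} → BCTree n m → GCCTree n m
  | m, .leaf alloc => branchNode fun r =>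
      allocChain alloc (Tuple.sort r) (List.finRange (m + 1))
  | _, .cut i j child => branchNode fun r =>
      GCCTree.cut i (fun _ : Fin 1 => (Tuple.sort r j.castSucc, Tuple.sort r j.succ))
        (simTree child)
  | _, @BCTree.choose _ _ i k children =>
      GCCTree.choose i (fun _ : Fin (k + 1) => ((0 : Fin _), (0 : Fin _)))
        (GCCTree.ifElse
          (cond := fun _ d => ⟨d.getLastD 0 % (k + 1), Nat.mod_lt _ (Nat.succ_pos k)⟩)
          (hcond := fun _ _ _ _ => rfl)
          (children := fun t => simTree (children t)))

end SimDef

section Values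

theorem allocOf_append {n : ℕ} (L₁ L₂ : List (ℝ × ℝ × Fin n)) (a : Fin n) :
    allocOf (L₁ ++ L₂) a = allocOf L₁ a ++ allocOf L₂ a := by
  simp [allocOf, List.filter_append]

theorem pieceValue_append (V : CakeValuation) (P₁ P₂ : Piece) :
    pieceValue V (P₁ ++ P₂) = pieceValue V P₁ + pieceValue V P₂ := by
  simp [pieceValue]

theorem v_self (V : CakeValuation) : V.v 0 0 = 0 := by
  have := V.additive 0 0 1 le_rfl le_rfl zero_le_one le_rfl
  linarith

theorem pieceValue_alloc_degenerate {n : ℕ} (V : CakeValuation)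
    (acc : List (ℝ × ℝ × Fin n)) (i a : Fin n) :
    pieceValue V (allocOf (acc ++ [((0 : ℝ), (0 : ℝ), i)]) a) =
      pieceValue V (allocOf acc a) := by
  rw [allocOf_append, pieceValue_append]
  by_cases h : i = a <;> simp [allocOf, pieceValue, h, v_self]

end Values

section SimPlay

theorem getLastD_filterMap_concat (h : Hist) (t : ℕ) :
    (List.getLastD ((h ++ [Sum.inr t]).filterMap Sum.getRight?) 0) = t := by
  rw [List.filterMap_append]
  simp [Sum.getRight?]

/-- The main simulation lemma: playing the GCC simulation against a strategy profile
`τ` produces, agent by agent, the same total value as playing the original BC tree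
against the shrunk profile. -/
theorem simTree_play {n : ℕ} (V : CakeValuation) (τ : Fin n → BCStrategy) :
    ∀ {m : ℕ} (B : BCTree n m) (p c : Fin (m + 2) → ℝ) (π : Equiv.Perm (Fin (m + 2))),
      c = p ∘ π → Monotone c → p 0 = 0 →
      ∀ (hB : Hist) (acc : List (ℝ × ℝ × Fin n)) (a : Fin n),
        pieceValue V (allocOf ((simTree B).play p (uHist hB) τ acc) a) =
          pieceValue V (allocOf acc a) +
            pieceValue V
              (allocOf (B.playAlloc c hB fun j => shrinkStrat (τ j)) a) := by
  intro m B
  induction B with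
  | @leaf m alloc =>
    intro p c π hpc hc h0 hB acc a
    have hsort : p ∘ Tuple.sort (rankF p) = c := by
      rw [hpc]
      exact Tuple.unique_monotone (monotone_comp_sort_rankF p) (hpc ▸ hc)
    simp only [simTree]
    rw [branchNode_play, allocChain_play]
    have hlist : ((List.finRange (m + 1)).map fun t =>
        (p (Tuple.sort (rankF p) t.castSucc), p (Tuple.sort (rankF p) t.succ), alloc t)) =
        (List.finRange (m + 1)).map fun t => (c t.castSucc, c t.succ, alloc t) := by
      apply List.map_congr_left
      intro t _
      simp [← hsort]
    rw [hlist]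
    simp only [BCTree.playAlloc]
    rw [allocOf_append, pieceValue_append]
  | @cut m i j child ih =>
    intro p c π hpc hc h0 hB acc a
    have hsort : p ∘ Tuple.sort (rankF p) = c := by
      rw [hpc]
      exact Tuple.unique_monotone (monotone_comp_sort_rankF p) (hpc ▸ hc)
    have h1 : p (Tuple.sort (rankF p) j.castSucc) = c j.castSucc := congrFun hsort _
    have h2 : p (Tuple.sort (rankF p) j.succ) = c j.succ := congrFun hsort _
    have hjj : c j.castSucc ≤ c j.succ := hc (Fin.castSucc_lt_succ : j.castSucc < j.succ).le
    simp only [simTree]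
    rw [branchNode_play]
    simp only [GCCTree.play, Nat.zero_add, Nat.mod_one, h1, h2, BCTree.playAlloc]
    have hmin : min (c j.castSucc) (c j.succ) = c j.castSucc := min_eq_left hjj
    have hmax : max (c j.castSucc) (c j.succ) = c j.succ := max_eq_right hjj
    rw [hmin, hmax]
    set y := max (c j.castSucc) (min ((τ i).cutAt (uHist hB)) (c j.succ)) with hy
    have hcy : (shrinkStrat (τ i)).cutAt hB = (τ i).cutAt (uHist hB) := rfl
    have hylo : c j.castSucc ≤ y := le_max_left _ _
    have hyhi : y ≤ c j.succ := max_le hjj (min_le_right _ _)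
    -- the new permutation
    have hjm : (j : ℕ) < m + 1 := j.isLt
    set f : Fin (m + 3) → Fin (m + 3) := fun t =>
      if h1 : (t : ℕ) ≤ (j : ℕ) then (π ⟨t, by omega⟩).castSucc
      else if (t : ℕ) = (j : ℕ) + 1 then Fin.last (m + 2)
      else (π ⟨(t : ℕ) - 1, by have := t.isLt; omega⟩).castSucc with hf
    have hfinj : Function.Injective f := by
      have hπv : ∀ (u v : ℕ) (hu : u < m + 2) (hv : v < m + 2),
          (π ⟨u, hu⟩).castSucc = (π ⟨v, hv⟩).castSucc → u = v := by
        intro u v hu hv h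
        have h2 := π.injective (Fin.castSucc_injective _ h)
        simpa using congrArg Fin.val h2
      intro s t hst
      simp only [hf] at hst
      split_ifs at hst
      all_goals
        first
        | (exact Fin.ext (by omega))
        | (exact absurd hst (Fin.castSucc_lt_last _).ne)
        | (exact absurd hst.symm (Fin.castSucc_lt_last _).ne)
        | (have := hπv _ _ _ _ hst; exact Fin.ext (by omega))
    have hfbij : Function.Bijective f := (Finite.injective_iff_bijective).1 hfinj
    set π' : Equiv.Perm (Fin (m + 3)) := Equiv.ofBijective f hfbij with hπ'
    have hπ'app : ∀ t, π' t = f t := fun t => rfl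
    have hπt : ∀ (s : Fin (m + 2)), extendPt p y s.castSucc = p s := by
      intro s
      simp only [extendPt, Fin.coe_castSucc]
      rw [dif_pos s.isLt]
    have hlast : extendPt p y (Fin.last (m + 2)) = y := by
      simp only [extendPt, Fin.val_last]
      rw [dif_neg (lt_irrefl _)]
    have hpc' : insertPt c j y = extendPt p y ∘ π' := by
      funext t
      simp only [Function.comp_apply, hπ'app, hf, insertPt]
      split_ifs with a1 a2
      · rw [hπt]
        exact congrFun hpc _
      · rw [hlast]
      · rw [hπt]
        exact congrFun hpc _
    have hc' : Monotone (insertPt c j y) := by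
      have hcc : ∀ (u v : ℕ) (hu : u < m + 2) (hv : v < m + 2), u ≤ v →
          c ⟨u, hu⟩ ≤ c ⟨v, hv⟩ := by
        intro u v hu hv huv
        exact hc huv
      have hylo' : c ⟨(j : ℕ), by omega⟩ ≤ y := hylo
      have hyhi' : y ≤ c ⟨(j : ℕ) + 1, by omega⟩ := hyhi
      intro s t hst
      have hst' : (s : ℕ) ≤ (t : ℕ) := hst
      have hsl := s.isLt
      have htl := t.isLt
      simp only [insertPt]
      split_ifs
      all_goals
        first
        | exact le_rfl
        | (exfalso; omega)
        | (exact hcc _ _ _ _ (by omega))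
        | (exact le_trans (hcc _ _ _ _ (by omega)) hylo')
        | (exact le_trans hyhi' (hcc _ _ _ _ (by omega)))
    have h0' : extendPt p y 0 = 0 := by
      simp only [extendPt]
      rw [dif_pos (by simp)]
      simpa using h0
    have hHist : uHist hB ++ [Sum.inr (0 : ℕ), Sum.inl y] =
        uHist (hB ++ [Sum.inl y]) := by
      rw [uHist_append]
      rfl
    rw [hcy, hHist]
    exact ih (extendPt p y) (insertPt c j y) π' hpc' hc' h0' (hB ++ [Sum.inl y]) acc a
  | @choose m i k children ih =>
    intro p c π hpc hc h0 hB acc a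
    simp only [simTree, GCCTree.play, BCTree.playAlloc]
    set t : ℕ := (τ i).chooseAt (uHist hB) % (k + 1) with ht
    have htk : t < k + 1 := Nat.mod_lt _ (Nat.succ_pos k)
    have hch : (shrinkStrat (τ i)).chooseAt hB = (τ i).chooseAt (uHist hB) := rfl
    have hHist : uHist hB ++ [Sum.inr t] = uHist (hB ++ [Sum.inr t]) := by
      rw [uHist_append]; rfl
    have hcond : (⟨(List.getLastD ((uHist hB ++ [Sum.inr t]).filterMap Sum.getRight?) 0)
        % (k + 1), Nat.mod_lt _ (Nat.succ_pos k)⟩ : Fin (k + 1)) =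
        ⟨t, htk⟩ := by
      apply Fin.ext
      simp only [getLastD_filterMap_concat]
      exact Nat.mod_eq_of_lt htk
    rw [hcond]
    have hp0 : p (0 : Fin (m + 2)) = 0 := h0
    rw [hHist, hp0]
    rw [ih ⟨t, htk⟩ p c π hpc hc h0 (hB ++ [Sum.inr t]) (acc ++ [(0, 0, i)]) a]
    rw [pieceValue_alloc_degenerate]
    congr 3

end SimPlay

section Final

theorem initPts_monotone : Monotone initPts := by
  intro s t hst
  have hst' : (s : ℕ) ≤ (t : ℕ) := hst
  simp only [initPts]
  split_ifs with h1 h2 h2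
  · exact le_rfl
  · norm_num
  · exfalso
    have hs : (s : ℕ) ≠ 0 := fun h => h1 (Fin.ext h)
    have ht : (t : ℕ) = 0 := congrArg Fin.val h2
    omega
  · exact le_rfl

theorem initPts_zero : initPts 0 = 0 := by simp [initPts]

theorem sim_envy {n : ℕ} (B : BCTree n 0) (τ : Fin n → BCStrategy) (V : CakeValuation)
    (i j : Fin n) :
    envy V ((simTree B).toGame.play τ) i j =
      envy V (B.toGame.play fun a => shrinkStrat (τ a)) i j := by
  have key : ∀ a : Fin n, pieceValue V ((simTree B).toGame.play τ a) =
      pieceValue V (B.toGame.play (fun b => shrinkStrat (τ b)) a) := by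
    intro a
    have h := simTree_play V τ B initPts initPts (Equiv.refl _) rfl initPts_monotone
      initPts_zero [] [] a
    have hnil : pieceValue V (allocOf ([] : List (ℝ × ℝ × Fin n)) a) = 0 := by
      simp [allocOf, pieceValue]
    rw [hnil, zero_add] at h
    exact h
  simp only [envy, key]

end Final

/-- **Theorem.** For every branch choice (BC) protocol there exists a generalised cut
and choose (GCC) protocol that is strongly envy-equivalent to it. -/
theorem bc_to_gcc {n : ℕ} (B : BCTree n 0) :
    ∃ G : GCCTree n 0, StronglyEnvyEquiv B.toGame G.toGame := by
  classical
  refine ⟨simTree B, ?_⟩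
  intro i S hiS M hM V
  constructor
  · rintro ⟨s, hs⟩
    refine ⟨expandStrat s, ?_⟩
    intro τ hτ j hj
    have hσ : (fun a => shrinkStrat (τ a)) i = s := by
      show shrinkStrat (τ i) = s
      rw [hτ]
      exact shrink_expand s
    have h := hs (fun a => shrinkStrat (τ a)) hσ j hj
    rw [show (simTree B).toGame.play τ = (simTree B).toGame.play τ from rfl]
    calc envy V ((simTree B).toGame.play τ) i j
        = envy V (B.toGame.play fun a => shrinkStrat (τ a)) i j := sim_envy B τ V i j
      _ ≤ M j := h
  · rintro ⟨s, hs⟩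
    refine ⟨shrinkStrat s, ?_⟩
    intro σ hσ j hj
    set τ : Fin n → BCStrategy := fun a => if a = i then s else expandStrat (σ a) with hτdef
    have hτi : τ i = s := by simp [hτdef]; rfl
    have hshr : (fun a => shrinkStrat (τ a)) = σ := by
      funext a
      by_cases ha : a = i
      · subst ha
        simp only [hτdef, if_pos rfl]
        exact hσ.symm
      · simp [hτdef, ha, shrink_expand]
        exact shrink_expand (σ a)
    have h := hs τ hτi j hj
    rw [sim_envy B τ V i j, hshr] at h
    exact h
end
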